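/- arXiv:1303.5308 — 7 statements merged into one kernel-verified Lean document; each statement's English description precedes it below -/
import Mathlib

section
/- Let V be a finite type with n = Fintype.card V ≥ 2, and let H be a simple graph on V whose number of edges is at most n − 2. Then Σ(H) = 0, i.e., the sum over all compatible partitions P of V of (−1)^{|P|−1}·(|P|−1)! equals 0. -/
open scoped Classical

/-- `P` is a partition of the (finite) vertex type `V` into nonempty blocks which is
compatible with the graph `H`: no block contains two adjacent vertices. -/
def CompatiblePartition {V : Type} [Fintype V] (H : SimpleGraph V)
    (P : Finset (Finset V)) : Prop :=
  (∀ E ∈ P, E.Nonempty) ∧ (∀ v : V, ∃! E, E ∈ P ∧ v ∈ E) ∧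
    ∀ E ∈ P, ∀ u ∈ E, ∀ v ∈ E, ¬ H.Adj u v

/-- `Σ(H) = ∑_{P compatible} (−1)^{|P|−1} (|P|−1)!`. -/
noncomputable def SigmaH {V : Type} [Fintype V] (H : SimpleGraph V) : ℤ :=
  ∑ P : Finset (Finset V),
    if CompatiblePartition H P then
      (-1 : ℤ) ^ (P.card - 1) * (Nat.factorial (P.card - 1) : ℤ)
    else 0

/-!
Grouping the proper colourings of `H` with `k` colours by their partitions into colour classes gives
`P_H(k) = ∑_P k (k - 1) ⋯ (k - |P| + 1)` over the compatible partitions `P`. Modulo `k`, the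
factor `(k - 1) ⋯ (k - |P| + 1)` is `(-1)^(|P|-1) (|P|-1)!`, so `P_H(k) / k ≡ Σ(H) [MOD k]`.
A graph on `n` vertices with at most `n - 2` edges is disconnected, and shifting the colours
independently on the component of a vertex and on its complement shows `k² ∣ P_H(k)`.
Hence every `k ≥ 1` divides `Σ(H)`.
-/

open Finset Function SimpleGraph
open scoped Nat

noncomputable section Fibres

variable {V : Type} [Fintype V] {α β : Type*}

def fibre (f : V → α) (v : V) : Finset V := {w | f w = f v}

def fibres (f : V → α) : Finset (Finset V) := univ.image (fibre f)

@[simp]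
lemma mem_fibre {f : V → α} {v w : V} : w ∈ fibre f v ↔ f w = f v := by
  simp [fibre]

lemma fibre_eq_fibre_iff {f : V → α} {u v : V} : fibre f u = fibre f v ↔ f u = f v :=
  ⟨fun h => mem_fibre.mp (h ▸ mem_fibre.mpr rfl), fun h => by ext w; simp [h]⟩

lemma fibres_eq_fibres_iff {f : V → α} {g : V → β} :
    fibres f = fibres g ↔ ∀ u v, f u = f v ↔ g u = g v := by
  constructor
  · intro h
    have hfibre : ∀ u, fibre f u = fibre g u := by
      intro u
      have hu : fibre f u ∈ fibres g := h ▸ mem_image_of_mem _ (mem_univ u)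
      obtain ⟨w, -, hw⟩ := mem_image.mp hu
      have hgu : g u = g w := by rw [← mem_fibre, hw, mem_fibre]
      rw [← hw, fibre_eq_fibre_iff.mpr hgu]
    intro u v
    rw [← fibre_eq_fibre_iff, ← fibre_eq_fibre_iff (f := g), hfibre, hfibre]
  · intro h
    refine image_congr fun u _ => ?_
    ext w
    simp [h]

lemma compatiblePartition_fibres_iff (H : SimpleGraph V) (f : V → α) :
    CompatiblePartition H (fibres f) ↔ ∀ ⦃u v⦄, H.Adj u v → f u ≠ f v := by
  simp only [CompatiblePartition, fibres, forall_mem_image, mem_fibre, mem_univ, forall_const]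
  refine ⟨fun h u v huv hf => h.2.2 u hf v rfl huv, fun h => ⟨?_, ?_, ?_⟩⟩
  · exact fun v => ⟨v, mem_fibre.mpr rfl⟩
  · intro v
    refine ⟨fibre f v, ⟨mem_image_of_mem _ (mem_univ v), mem_fibre.mpr rfl⟩, ?_⟩
    rintro E ⟨hE, hv⟩
    obtain ⟨w, -, rfl⟩ := mem_image.mp hE
    exact fibre_eq_fibre_iff.mpr (mem_fibre.mp hv).symm
  · exact fun x u hu v hv huv => h huv (hu.trans hv.symm)

lemma exists_surjective_fibres_eq {P : Finset (Finset V)} (hP₁ : ∀ E ∈ P, E.Nonempty)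
    (hP₂ : ∀ v : V, ∃! E, E ∈ P ∧ v ∈ E) :
    ∃ q : V → P, Surjective q ∧ fibres q = P := by
  choose blk hblk using fun v => (hP₂ v).exists
  have mem_iff : ∀ E ∈ P, ∀ w, w ∈ E ↔ blk w = E := fun E hE w =>
    ⟨fun hw => (hP₂ w).unique (hblk w) ⟨hE, hw⟩, fun h => h ▸ (hblk w).2⟩
  let q : V → P := fun v => ⟨blk v, (hblk v).1⟩
  refine ⟨q, fun E => ?_, ?_⟩
  · obtain ⟨w, hw⟩ := hP₁ E E.2
    exact ⟨w, Subtype.ext ((mem_iff E E.2 w).mp hw)⟩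
  · have hfibre : ∀ v, fibre q v = blk v := fun v => by
      ext w
      simp [q, mem_iff _ (hblk v).1 w]
    ext E
    simp only [fibres, mem_image, mem_univ, true_and, hfibre]
    refine ⟨fun ⟨v, hv⟩ => hv ▸ (hblk v).1, fun hE => ?_⟩
    obtain ⟨w, hw⟩ := hP₁ E hE
    exact ⟨w, (mem_iff E hE w).mp hw⟩

def kernelEquivEmbedding {q : V → β} (hq : Surjective q) :
    {f : V → α // ∀ u v, f u = f v ↔ q u = q v} ≃ (β ↪ α) where
  toFun f := ⟨f.1 ∘ surjInv hq, fun x y hxy => by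
    simpa [surjInv_eq] using (f.2 _ _).mp hxy⟩
  invFun g := ⟨g ∘ q, fun u v => g.injective.eq_iff⟩
  left_inv f := Subtype.ext <| funext fun v => (f.2 _ _).mpr (surjInv_eq hq _)
  right_inv g := Embedding.ext fun x => congrArg g (surjInv_eq hq x)

lemma card_fibres_eq_descFactorial [Fintype α] {P : Finset (Finset V)}
    (hP₁ : ∀ E ∈ P, E.Nonempty) (hP₂ : ∀ v : V, ∃! E, E ∈ P ∧ v ∈ E) :
    #{f : V → α | fibres f = P} = (Fintype.card α).descFactorial #P := by
  obtain ⟨q, hq, hqP⟩ := exists_surjective_fibres_eq hP₁ hP₂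
  rw [← Fintype.card_subtype, ← Fintype.card_coe P, ← Fintype.card_embedding_eq]
  refine Fintype.card_congr ((Equiv.subtypeEquivRight fun f => ?_).trans (kernelEquivEmbedding hq))
  rw [← fibres_eq_fibres_iff, hqP]

end Fibres

section Colorings

variable {V : Type} [Fintype V] {α : Type*} [Fintype α] (H : SimpleGraph V)

lemma card_coloring_eq_card_filter :
    Fintype.card (H.Coloring α) = #{f : V → α | ∀ ⦃u v⦄, H.Adj u v → f u ≠ f v} := by
  rw [← Fintype.card_subtype]
  exact Fintype.card_congr
    { toFun C := ⟨C, fun _ _ => C.valid⟩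
      invFun f := Coloring.mk f.1 fun h => f.2 h
      left_inv _ := rfl
      right_inv _ := rfl }

lemma card_coloring_eq_sum_descFactorial :
    Fintype.card (H.Coloring α) = ∑ P : Finset (Finset V),
      if CompatiblePartition H P then (Fintype.card α).descFactorial #P else 0 := by
  rw [card_coloring_eq_card_filter, card_eq_sum_card_fiberwise (f := fibres) (t := univ)
    fun _ _ => mem_univ _]
  refine sum_congr rfl fun P _ => ?_
  rw [filter_filter]
  split_ifs with hP
  · rw [← card_fibres_eq_descFactorial hP.1 hP.2.1]
    congr 1
    refine filter_congr fun f _ => and_iff_right_of_imp fun hf => ?_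
    exact (compatiblePartition_fibres_iff H f).mp (hf ▸ hP)
  · refine card_eq_zero.mpr (filter_eq_empty_iff.mpr fun f _ ⟨hf, hfP⟩ => hP ?_)
    exact hfP ▸ (compatiblePartition_fibres_iff H f).mpr hf

end Colorings

section Translation

variable {V : Type} {α : Type*} [AddGroup α] {H : SimpleGraph V}

def SimpleGraph.Coloring.translate (C : H.Coloring α) (c : V → α)
    (hc : ∀ ⦃u v⦄, H.Adj u v → c u = c v) : H.Coloring α :=
  Coloring.mk (fun v => C v + c v) fun h heq => C.valid h (add_right_cancel (hc h ▸ heq))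

@[simp]
lemma SimpleGraph.Coloring.translate_apply (C : H.Coloring α) (c : V → α)
    (hc : ∀ ⦃u v⦄, H.Adj u v → c u = c v) (v : V) : C.translate c hc v = C v + c v :=
  rfl

variable [Fintype V] [Fintype α]

lemma sq_card_dvd_card_coloring_of_not_reachable {a b : V} (hab : ¬ H.Reachable a b) :
    Fintype.card α ^ 2 ∣ Fintype.card (H.Coloring α) := by
  let c : α → α → V → α := fun s t v => if H.Reachable a v then s else t
  have hc : ∀ s t, ∀ ⦃u v⦄, H.Adj u v → c s t u = c s t v := fun s t u v huv => by
    simp only [c, (⟨fun h => h.trans huv.reachable, fun h => h.trans huv.symm.reachable⟩ :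
      H.Reachable a u ↔ H.Reachable a v)]
  have hca : ∀ s t, c s t a = s := fun s t => if_pos .rfl
  have hcb : ∀ s t, c s t b = t := fun s t => if_neg hab
  have hneg : ∀ s t v, c (-s) (-t) v = -c s t v := fun s t v => (apply_ite Neg.neg _ _ _).symm
  have e : H.Coloring α ≃ (α × α) × {C : H.Coloring α // C a = 0 ∧ C b = 0} :=
    { toFun C := ((C a, C b),
        ⟨C.translate (c (-C a) (-C b)) (hc _ _), by simp [hca], by simp [hcb]⟩)
      invFun x := x.2.1.translate (c x.1.1 x.1.2) (hc _ _)
      left_inv C := by ext v; simp [hneg]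
      right_inv := by
        rintro ⟨⟨s, t⟩, C, hCa, hCb⟩
        ext v <;> simp [hca, hcb, hCa, hCb, hneg] }
  rw [Fintype.card_congr e, Fintype.card_prod, Fintype.card_prod, sq]
  exact dvd_mul_right _ _

end Translation

lemma Nat.cast_descFactorial_zmod_succ (n j : ℕ) :
    (n.descFactorial j : ZMod (n + 1)) = (-1) ^ j * j ! := by
  have hcast : (n : ZMod (n + 1)) = -1 :=
    eq_neg_of_add_eq_zero_left (by exact_mod_cast ZMod.natCast_self _)
  rw [← descPochhammer_eval_eq_descFactorial, descPochhammer_eval_eq_prod_range, hcast,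
    ← prod_range_add_one_eq_factorial, Nat.cast_prod, ← card_range j, ← prod_const,
    card_range, ← prod_mul_distrib]
  exact prod_congr rfl fun i _ => by push_cast; ring

section Sigma

variable {V : Type} [Fintype V] (H : SimpleGraph V)

lemma succ_dvd_sigmaH_of_not_preconnected (hH : ¬ H.Preconnected) (n : ℕ) :
    ((n + 1 : ℕ) : ℤ) ∣ SigmaH H := by
  obtain ⟨a, b, hab⟩ : ∃ a b, ¬ H.Reachable a b := by simpa [Preconnected] using hH
  set R := ∑ P : Finset (Finset V),
    if CompatiblePartition H P then n.descFactorial (#P - 1) else 0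
  have hcard : Fintype.card (H.Coloring (ZMod (n + 1))) = (n + 1) * R := by
    rw [card_coloring_eq_sum_descFactorial, ZMod.card, mul_sum]
    refine sum_congr rfl fun P _ => ?_
    split_ifs with hP
    · obtain ⟨E, ⟨hE, -⟩, -⟩ := hP.2.1 a
      obtain ⟨j, hj⟩ := Nat.exists_eq_add_one.mpr (card_pos.mpr ⟨E, hE⟩)
      rw [hj, Nat.succ_descFactorial_succ, Nat.add_sub_cancel]
    · rw [mul_zero]
  have hR : n + 1 ∣ R := by
    have := sq_card_dvd_card_coloring_of_not_reachable (α := ZMod (n + 1)) hab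
    rw [ZMod.card, hcard, sq] at this
    exact Nat.dvd_of_mul_dvd_mul_left n.succ_pos this
  rw [← ZMod.intCast_zmod_eq_zero_iff_dvd, SigmaH, ← (ZMod.natCast_eq_zero_iff R _).mpr hR]
  push_cast [R]
  refine sum_congr rfl fun P _ => ?_
  split_ifs <;> simp [Nat.cast_descFactorial_zmod_succ]

lemma sigmaH_eq_zero_of_not_preconnected (hH : ¬ H.Preconnected) : SigmaH H = 0 :=
  Int.eq_zero_of_abs_lt_dvd (succ_dvd_sigmaH_of_not_preconnected H hH (SigmaH H).natAbs)
    (by rw [Int.abs_eq_natAbs]; omega)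

end Sigma

theorem sigma_eq_zero_of_few_edges {V : Type} [Fintype V] [DecidableEq V]
    (H : SimpleGraph V) [DecidableRel H.Adj]
    (hn : 2 ≤ Fintype.card V)
    (hedges : H.edgeFinset.card ≤ Fintype.card V - 2) :
    SigmaH H = 0 := by
  refine sigmaH_eq_zero_of_not_preconnected H fun hH => ?_
  have : Nonempty V := Fintype.card_pos_iff.mp (by omega)
  have := (Connected.mk hH).card_vert_le_card_edgeSet_add_one
  rw [Nat.card_eq_fintype_card, Nat.card_eq_fintype_card, ← edgeFinset_card] at this
  omega
end

section
/- Let V be a finite nonempty type and H a simple graph on V. For every q ∈ ℕ let c_H(q) be the number of functions f : V → Fin q such that f(u) ≠ f(v) whenever u and v are adjacent in H. If P ∈ ℚ[X] is a polynomial satisfying P(q) = c_H(q) for every natural number q, then the derivative of P evaluated at 0 equals Σ(H). -/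
open scoped Classical

/-!
Grouping the proper colourings of `H` by their colour classes gives
`c_H(q) = ∑_{P compatible} q (q - 1) ⋯ (q - |P| + 1)`: a compatible partition `P` is the
partition into colour classes of exactly those colourings that give its blocks pairwise
distinct colours. So the interpolating polynomial is `∑_P X (X - 1) ⋯ (X - |P| + 1)`, and the
derivative at `0` of `X (X - 1) ⋯ (X - k)` is `(-1) (-2) ⋯ (-k) = (-1)^k k!`. On a nonempty
vertex type every compatible partition has a block, so `k = |P| - 1` is never truncated.
-/

open Finset Polynomial

section FiberPartition

variable {V : Type} [Fintype V] {α : Type*}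

noncomputable def fiberPartition (f : V → α) : Finset (Finset V) :=
  univ.image fun v ↦ ({u | f u = f v} : Finset V)

lemma fiber_mem_fiberPartition (f : V → α) (v : V) :
    ({u | f u = f v} : Finset V) ∈ fiberPartition f :=
  mem_image_of_mem _ (mem_univ v)

lemma eq_fiber_of_mem_fiberPartition {f : V → α} {E : Finset V} {v : V}
    (hE : E ∈ fiberPartition f) (hv : v ∈ E) : E = ({u | f u = f v} : Finset V) := by
  obtain ⟨w, -, rfl⟩ := mem_image.mp hE
  rw [(mem_filter.mp hv).2]

lemma compatiblePartition_fiberPartition_iff {H : SimpleGraph V} {f : V → α} :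
    CompatiblePartition H (fiberPartition f) ↔ ∀ u v, H.Adj u v → f u ≠ f v := by
  refine ⟨fun h u v hadj huv ↦ ?_, fun hf ↦ ⟨?_, fun v ↦ ?_, ?_⟩⟩
  · exact h.2.2 _ (fiber_mem_fiberPartition f v) u (by simp [huv]) v (by simp) hadj
  · rintro E hE
    obtain ⟨w, -, rfl⟩ := mem_image.mp hE
    exact ⟨w, by simp⟩
  · exact ⟨_, ⟨fiber_mem_fiberPartition f v, by simp⟩,
      fun E ⟨hE, hv⟩ ↦ eq_fiber_of_mem_fiberPartition hE hv⟩
  · intro E hE u hu v hv hadj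
    rw [eq_fiber_of_mem_fiberPartition hE hu, mem_filter] at hv
    exact hf u v hadj hv.2.symm

end FiberPartition

namespace CompatiblePartition

variable {V : Type} [Fintype V] {H : SimpleGraph V} {P : Finset (Finset V)} {α : Type*}

lemma nonempty [Nonempty V] (hP : CompatiblePartition H P) : P.Nonempty :=
  have ⟨E, hE, _⟩ := (hP.2.1 (Classical.arbitrary V)).exists
  ⟨E, hE⟩

variable (hP : CompatiblePartition H P)

noncomputable def block (v : V) : P :=
  ⟨_, (hP.2.1 v).exists.choose_spec.1⟩

lemma block_eq_iff {v : V} {E : P} : hP.block v = E ↔ v ∈ (E : Finset V) := by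
  refine ⟨?_, fun hv ↦
    Subtype.ext <| (hP.2.1 v).unique (hP.2.1 v).exists.choose_spec ⟨E.2, hv⟩⟩
  rintro rfl
  exact (hP.2.1 v).exists.choose_spec.2

lemma block_surjective : Function.Surjective hP.block := fun E ↦
  have ⟨v, hv⟩ := hP.1 E E.2
  ⟨v, (hP.block_eq_iff).mpr hv⟩

lemma block_eq_block_iff {f : V → α} (hf : fiberPartition f = P) {u v : V} :
    hP.block u = hP.block v ↔ f u = f v := by
  let F : P := ⟨({w | f w = f v} : Finset V), hf ▸ fiber_mem_fiberPartition f v⟩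
  have hv : hP.block v = F := hP.block_eq_iff.mpr (by simp [F])
  rw [hv, hP.block_eq_iff]
  simp [F]

lemma fiberPartition_comp_block (g : P ↪ α) :
    fiberPartition (g ∘ hP.block) = P := by
  have fiber_eq : ∀ v, ({u | g (hP.block u) = g (hP.block v)} : Finset V) = hP.block v := by
    intro v
    ext u
    simp [hP.block_eq_iff]
  ext E
  simp only [fiberPartition, Function.comp_apply, fiber_eq, mem_image, mem_univ, true_and]
  exact ⟨by rintro ⟨v, rfl⟩; exact (hP.block v).2,
    fun hE ↦ (hP.block_surjective ⟨E, hE⟩).imp fun v hv ↦ by rw [hv]⟩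

lemma exists_embedding_of_fiberPartition_eq {f : V → α} (hf : fiberPartition f = P) :
    ∃ g : P ↪ α, g ∘ hP.block = f := by
  let s := Function.surjInv hP.block_surjective
  have hs : ∀ E, hP.block (s E) = E := Function.surjInv_eq hP.block_surjective
  refine ⟨⟨f ∘ s, fun E₁ E₂ h ↦ ?_⟩, funext fun v ↦ ?_⟩
  · rw [← hs E₁, ← hs E₂]
    exact (hP.block_eq_block_iff hf).mpr h
  · exact (hP.block_eq_block_iff hf).mp (hs _)

lemma card_fiberPartition_eq [Fintype α] (hP : CompatiblePartition H P) :
    #{f : V → α | fiberPartition f = P} = (Fintype.card α).descFactorial #P := by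
  let compBlock : (P ↪ α) ↪ (V → α) :=
    ⟨fun g ↦ g ∘ hP.block, fun g g' h ↦ DFunLike.coe_injective <|
      hP.block_surjective.injective_comp_right h⟩
  have : ({f | fiberPartition f = P} : Finset (V → α)) = univ.map compBlock := by
    ext f
    simp only [mem_filter, mem_univ, true_and, mem_map]
    exact ⟨fun hf ↦ (hP.exists_embedding_of_fiberPartition_eq hf).imp fun _ h ↦ h,
      by rintro ⟨g, -, rfl⟩; exact hP.fiberPartition_comp_block g⟩
  rw [this, card_map, card_univ, Fintype.card_embedding_eq, Fintype.card_coe]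

end CompatiblePartition

theorem card_proper_colorings_eq_sum {V : Type} [Fintype V] (H : SimpleGraph V) (α : Type*)
    [Fintype α] :
    Nat.card {f : V → α // ∀ u v, H.Adj u v → f u ≠ f v} =
      ∑ P with CompatiblePartition H P, (Fintype.card α).descFactorial #P := by
  simp_rw [Nat.card_eq_fintype_card, Fintype.card_subtype,
    ← compatiblePartition_fiberPartition_iff (H := H)]
  rw [card_eq_sum_card_fiberwise (f := fiberPartition) fun f hf ↦
    mem_filter.mpr ⟨mem_univ _, (mem_filter.mp hf).2⟩]
  refine sum_congr rfl fun P hPmem ↦ ?_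
  have hP : CompatiblePartition H P := (mem_filter.mp hPmem).2
  rw [filter_filter, ← hP.card_fiberPartition_eq]
  congr 1
  exact filter_congr fun f _ ↦ and_iff_right_of_imp fun hf ↦ hf ▸ hP

lemma descPochhammer_eval_neg_one (R : Type*) [CommRing R] (k : ℕ) :
    (descPochhammer R k).eval (-1) = (-1) ^ k * k.factorial := by
  have h := ascPochhammer_eval_neg_eq_descPochhammer R (-1) k
  rw [neg_neg, ascPochhammer_eval_one] at h
  rw [h, ← mul_assoc, ← mul_pow, neg_one_mul, neg_neg, one_pow, one_mul]

lemma derivative_descPochhammer_succ_eval_zero (R : Type*) [CommRing R] (k : ℕ) :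
    (derivative (descPochhammer R (k + 1))).eval 0 = (-1) ^ k * k.factorial := by
  rw [descPochhammer_succ_left, derivative_mul, derivative_X, eval_add, eval_mul, eval_mul,
    eval_X, eval_comp, eval_sub, eval_X, eval_one, zero_sub, descPochhammer_eval_neg_one]
  simp

section ChromaticPolynomial

variable {V : Type} [Fintype V] (R : Type*) [CommRing R] (H : SimpleGraph V)

noncomputable def chromaticPolynomial : R[X] :=
  ∑ P with CompatiblePartition H P, descPochhammer R #P

lemma chromaticPolynomial_eval_natCast (q : ℕ) :
    (chromaticPolynomial R H).eval (q : R) =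
      Nat.card {f : V → Fin q // ∀ u v, H.Adj u v → f u ≠ f v} := by
  rw [card_proper_colorings_eq_sum, Fintype.card_fin, chromaticPolynomial, eval_finsetSum]
  push_cast
  exact sum_congr rfl fun P _ ↦ descPochhammer_eval_eq_descFactorial R q #P

lemma derivative_chromaticPolynomial_eval_zero [Nonempty V] :
    (derivative (chromaticPolynomial R H)).eval 0 = SigmaH H := by
  rw [chromaticPolynomial, derivative_sum, eval_finsetSum, SigmaH, Int.cast_sum, sum_filter]
  refine sum_congr rfl fun P _ ↦ ?_
  split_ifs with hP
  · obtain ⟨k, hk⟩ := Nat.exists_eq_add_one.mpr hP.nonempty.card_pos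
    simp [hk, derivative_descPochhammer_succ_eval_zero]
  · simp

end ChromaticPolynomial

/-- If `P` is a polynomial whose value at every natural number `q` is the number of proper
colorings of `H` with `q` colors, then `P'(0) = Σ(H)`. -/
theorem derivative_chromatic_at_zero_eq_sigma {V : Type} [Fintype V] [Nonempty V]
    (H : SimpleGraph V) (P : Polynomial ℚ)
    (hP : ∀ q : ℕ, P.eval (q : ℚ) =
      Nat.card {f : V → Fin q // ∀ u v : V, H.Adj u v → f u ≠ f v}) :
    (Polynomial.derivative P).eval 0 = (SigmaH H : ℚ) := by
  have hP_eq : P = chromaticPolynomial ℚ H := by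
    refine eq_of_infinite_eval_eq _ _ <|
      (Set.infinite_range_of_injective Nat.cast_injective).mono ?_
    rintro _ ⟨q, rfl⟩
    exact (hP q).trans (chromaticPolynomial_eval_natCast ℚ H q).symm
  rw [hP_eq, derivative_chromaticPolynomial_eval_zero]
end

section
/- For all positive integers a and b, the following identity holds in ℤ: ∑_{q=0}^{min(a,b)} (−1)^{a+b−q−1} · (a+b−q−1)! · C(a,q) · C(b,q) · q! = 0, where C(n,k) denotes the binomial coefficient. -/
theorem alternating_pairing_identity (a b : ℕ) (ha : 0 < a) (hb : 0 < b) :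
    ∑ q ∈ Finset.range (min a b + 1),
      (-1 : ℤ) ^ (a + b - q - 1) * (Nat.factorial (a + b - q - 1) : ℤ) *
        (a.choose q : ℤ) * (b.choose q : ℤ) * (Nat.factorial q : ℤ) = 0 := by
  have key : ∀ q : ℕ, q ≤ min a b →
      ∑ j ∈ Finset.range (q + 1),
        (-1 : ℤ) ^ (a + b - j - 1) * (Nat.factorial (a + b - j - 1) : ℤ) *
          (a.choose j : ℤ) * (b.choose j : ℤ) * (Nat.factorial j : ℤ)
      = (-1 : ℤ) ^ (a + b - q - 1) * (Nat.factorial (a + b - q - 1) : ℤ) *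
          ((a - 1).choose q : ℤ) * ((b - 1).choose q : ℤ) * (Nat.factorial q : ℤ) := by
    intro q
    induction q with
    | zero => intro _; simp
    | succ q ih =>
      intro hq
      have hqa : q + 1 ≤ a := le_trans hq (min_le_left a b)
      have hqb : q + 1 ≤ b := le_trans hq (min_le_right a b)
      obtain ⟨x, hx⟩ : ∃ x, a = q + 1 + x := ⟨a - (q + 1), by omega⟩
      obtain ⟨y, hy⟩ : ∃ y, b = q + 1 + y := ⟨b - (q + 1), by omega⟩
      rw [Finset.sum_range_succ, ih (by omega)]
      have e1 : a + b - q - 1 = q + x + y + 1 := by omega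
      have e2 : a + b - (q + 1) - 1 = q + x + y := by omega
      have e3 : a - 1 = q + x := by omega
      have e4 : b - 1 = q + y := by omega
      rw [e1, e2, e3, e4]
      rw [show a.choose (q + 1) = (q + x).choose q + (q + x).choose (q + 1) by
            rw [show a = (q + x) + 1 by omega]; exact Nat.choose_succ_succ _ _,
          show b.choose (q + 1) = (q + y).choose q + (q + y).choose (q + 1) by
            rw [show b = (q + y) + 1 by omega]; exact Nat.choose_succ_succ _ _]
      have h3 : ((q + x).choose (q + 1) : ℤ) * (q + 1) = ((q + x).choose q : ℤ) * x := by
        have h := Nat.choose_succ_right_eq (q + x) q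
        rw [show q + x - q = x by omega] at h
        exact_mod_cast h
      have h4 : ((q + y).choose (q + 1) : ℤ) * (q + 1) = ((q + y).choose q : ℤ) * y := by
        have h := Nat.choose_succ_right_eq (q + y) q
        rw [show q + y - q = y by omega] at h
        exact_mod_cast h
      rw [Nat.factorial_succ (q + x + y), Nat.factorial_succ q]
      push_cast
      linear_combination
        ((-1 : ℤ) ^ (q + x + y) * ((q + x + y).factorial : ℤ) * (q.factorial : ℤ) *
            ((q + x).choose q : ℤ)) * h4 +
        ((-1 : ℤ) ^ (q + x + y) * ((q + x + y).factorial : ℤ) * (q.factorial : ℤ) *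
            ((q + y).choose q : ℤ)) * h3
  rw [key (min a b) le_rfl]
  rcases le_total a b with hab | hab
  · rw [min_eq_left hab, Nat.choose_eq_zero_of_lt (show a - 1 < a by omega)]
    push_cast; ring
  · rw [min_eq_right hab, Nat.choose_eq_zero_of_lt (show b - 1 < b by omega)]
    push_cast; ring
end

section
/- Let (T, (a_t,b_t,w_t)_{t∈T}) be a nonempty labeled long-edge family with a distribution Δ. For k ∈ ℕ define Q̃_*(k) = ∑_P (−1)^{|P|−1}·(|P|−1)! · ∏_{E ∈ P} ∏_{i ∈ ℕ} (k + i − w_i(E) + m_i(E))_{m_i(E)}, where the outer sum is over all partitions P of T into nonempty blocks and |P| is the number of blocks (each inner product is finite, since all but finitely many factors equal 1). Then there exist integers A and B such that Q̃_*(k) = A·k + B for all k ∈ ℕ; in particular Q̃_*(k) is linear in the offset k. -/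
open scoped Classical

/-- `w_i(E)`: the total weight of the edges in `E` lying over the interval `[i, i+1]`. -/
def wOf {T : Type} (a b w : T → ℕ) (E : Finset T) (i : ℕ) : ℕ :=
  ∑ t ∈ E.filter (fun t => a t ≤ i ∧ i < b t), w t

/-- `m_i(E)`: the number of edges in `E` whose distribution value is `i`. -/
def mOf {T : Type} (Δ : T → ℕ) (E : Finset T) (i : ℕ) : ℕ :=
  (E.filter (fun t => Δ t = i)).card

/-- `P` is a partition of the finite type `T` into nonempty blocks. -/
def IsPartitionOfUniv {T : Type} (P : Finset (Finset T)) : Prop :=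
  (∀ E ∈ P, E.Nonempty) ∧ ∀ x : T, ∃! E, E ∈ P ∧ x ∈ E

/-- The (allowability-free) count `N_*` of orderings of the `k`-offset family
restricted to the block `E`. -/
noncomputable def NstarOffset {T : Type} (a b w Δ : T → ℕ) (k : ℕ) (E : Finset T) : ℤ :=
  ∏ᶠ i : ℕ, (descPochhammer ℤ (mOf Δ E i)).eval
    ((k : ℤ) + (i : ℤ) - (wOf a b w E i : ℤ) + (mOf Δ E i : ℤ))

/-!
Write `f ⋆ g` for the subset convolution `E ↦ ∑_{B ⊆ E} f B * g (E \ B)`. The sum `Q̃_*(k)` is the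
cumulant (the `⋆`-logarithm) of the set function `N_k := NstarOffset a b w Δ k`, and cumulants
turn `⋆` into `+`: restricting a set function to the sets containing a point `t` is a derivation
of `⋆`, and `⋆`-multiplying the restricted cumulant of `f` by `f` gives back the restriction of
`f`; this recursion determines the cumulant.

Let the offset depend on the level, `x : ℕ → ℤ` in place of `i ↦ k + i`. Raising `x` by one at a
level `i` acts on the product of falling factorials as a discrete derivative that deletes one edge
`t` with `Δ t = i`. Comparing the two resulting sums, by induction on the block, shows that
`N_x ⋆ N_y` depends only on `x + y`. Hence `N_k ⋆ N_{k+2} = N_{k+1} ⋆ N_{k+1}`, so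
`Q̃_*(k) + Q̃_*(k+2) = 2 Q̃_*(k+1)`, and `Q̃_*` is linear.
-/

open Finset

namespace LongEdgeFamily

section SetFunctions

variable {α R : Type*} [CommRing R] {E B C : Finset α} {P : Finset (Finset α)}
  {f g h : Finset α → R}

noncomputable def partitionsOf (E : Finset α) : Finset (Finset (Finset α)) :=
  univ.image (Finpartition.parts (a := E))

theorem mem_partitionsOf : P ∈ partitionsOf E ↔ ∃ Q : Finpartition E, Q.parts = P := by
  simp [partitionsOf]

theorem singleton_mem_partitionsOf (hE : E.Nonempty) : {E} ∈ partitionsOf E :=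
  mem_partitionsOf.2 ⟨Finpartition.indiscrete hE.ne_empty, rfl⟩

theorem subset_of_mem_partitionsOf (hP : P ∈ partitionsOf E) (hC : C ∈ P) : C ⊆ E := by
  obtain ⟨Q, rfl⟩ := mem_partitionsOf.1 hP
  exact Q.subset hC

theorem nonempty_of_mem_partitionsOf (hP : P ∈ partitionsOf E) (hC : C ∈ P) : C.Nonempty := by
  obtain ⟨Q, rfl⟩ := mem_partitionsOf.1 hP
  exact Q.nonempty_of_mem_parts hC

theorem eq_singleton_of_mem_partitionsOf (hP : P ∈ partitionsOf E) (h : #P = 1) : P = {E} := by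
  obtain ⟨Q, rfl⟩ := mem_partitionsOf.1 hP
  obtain ⟨B, hB⟩ := card_eq_one.1 h
  have hsup := Q.sup_parts
  rw [hB, sup_singleton] at hsup
  rw [hB, ← hsup, id]

theorem card_filter_mem_of_mem_partitionsOf (hP : P ∈ partitionsOf E) {t : α} (ht : t ∈ E) :
    #(P.filter (t ∈ ·)) = 1 := by
  obtain ⟨Q, rfl⟩ := mem_partitionsOf.1 hP
  obtain ⟨B, hB, huniq⟩ := Q.existsUnique_mem ht
  refine card_eq_one.2 ⟨B, ext fun D => ?_⟩
  rw [mem_filter, mem_singleton]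
  exact ⟨huniq D, fun h => h ▸ hB⟩

theorem sdiff_notMem_of_mem_partitionsOf (hP : P ∈ partitionsOf B) (hBE : B ⊂ E) :
    E \ B ∉ P := fun h => by
  obtain ⟨x, hx⟩ := sdiff_nonempty.2 (not_subset_of_ssubset hBE)
  exact (mem_sdiff.1 hx).2 (subset_of_mem_partitionsOf hP h hx)

theorem insert_sdiff_mem_partitionsOf (hP : P ∈ partitionsOf B) (hBE : B ⊂ E) :
    insert (E \ B) P ∈ partitionsOf E := by
  obtain ⟨Q, rfl⟩ := mem_partitionsOf.1 hP
  exact mem_partitionsOf.2 ⟨Q.extend (sdiff_nonempty.2 (not_subset_of_ssubset hBE)).ne_empty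
    disjoint_sdiff (union_sdiff_of_subset hBE.subset), rfl⟩

theorem erase_mem_partitionsOf (hP : P ∈ partitionsOf E) (hC : C ∈ P) :
    P.erase C ∈ partitionsOf (E \ C) := by
  obtain ⟨Q, rfl⟩ := mem_partitionsOf.1 hP
  refine mem_partitionsOf.2 ⟨Q.ofSubset (erase_subset C Q.parts) ?_, rfl⟩
  have hdisj : Disjoint C ((Q.parts.erase C).sup id) :=
    Q.supIndep (erase_subset C Q.parts) hC (notMem_erase C Q.parts)
  have hsup := Q.sup_parts
  rw [← insert_erase hC, sup_insert, id] at hsup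
  calc (Q.parts.erase C).sup id = (C ⊔ (Q.parts.erase C).sup id) \ C := by
        rw [sup_sdiff_left_self, hdisj.symm.sdiff_eq_left]
    _ = E \ C := by rw [hsup]

def partitionCoeff (q : ℕ) : R := (-1) ^ (q - 1) * ((q - 1).factorial : R)

theorem partitionCoeff_add_mul {q : ℕ} (hq : 1 ≤ q) :
    partitionCoeff q + ((q - 1 : ℕ) : R) * partitionCoeff (q - 1) = if q = 1 then 1 else 0 := by
  obtain ⟨m, rfl⟩ := Nat.exists_eq_add_of_le' hq
  rcases m with _ | m
  · simp [partitionCoeff]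
  · simp only [partitionCoeff, Nat.add_sub_cancel, show m + 1 - 1 = m from rfl,
      Nat.factorial_succ]
    push_cast
    ring

noncomputable def cumulant (f : Finset α → R) (E : Finset α) : R :=
  ∑ P ∈ partitionsOf E, partitionCoeff #P * ∏ B ∈ P, f B

noncomputable def subsetConv (f g : Finset α → R) (E : Finset α) : R :=
  ∑ B ∈ E.powerset, f B * g (E \ B)

noncomputable def pointed (t : α) (f : Finset α → R) (B : Finset α) : R := if t ∈ B then f B else 0

theorem subsetConv_comm (f g : Finset α → R) : subsetConv f g = subsetConv g f := by
  funext E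
  refine sum_nbij' (E \ ·) (E \ ·) (by simp) (by simp) ?_ ?_ ?_ <;>
    intro B hB <;> rw [mem_powerset] at hB
  · exact Finset.sdiff_sdiff_eq_self hB
  · exact Finset.sdiff_sdiff_eq_self hB
  · rw [Finset.sdiff_sdiff_eq_self hB, mul_comm]

theorem subsetConv_assoc (f g h : Finset α → R) :
    subsetConv (subsetConv f g) h = subsetConv f (subsetConv g h) := by
  funext E
  simp only [subsetConv, sum_mul, mul_sum]
  rw [sum_sigma', sum_sigma']
  refine sum_nbij' (fun p => ⟨p.2, p.1 \ p.2⟩) (fun q => ⟨q.1 ∪ q.2, q.1⟩) ?_ ?_ ?_ ?_ ?_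
  · rintro ⟨C, B⟩ hp
    simp only [mem_sigma, mem_powerset] at hp ⊢
    exact ⟨hp.2.trans hp.1, sdiff_subset_sdiff hp.1 le_rfl⟩
  · rintro ⟨B, D⟩ hq
    simp only [mem_sigma, mem_powerset] at hq ⊢
    exact ⟨union_subset hq.1 (hq.2.trans sdiff_subset), subset_union_left⟩
  · rintro ⟨C, B⟩ hp
    simp only [mem_sigma, mem_powerset] at hp
    simp [union_sdiff_of_subset hp.2]
  · rintro ⟨B, D⟩ hq
    simp only [mem_sigma, mem_powerset] at hq
    simp [union_sdiff_cancel_left (disjoint_of_subset_right hq.2 disjoint_sdiff)]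
  · rintro ⟨C, B⟩ hp
    simp only [mem_sigma, mem_powerset] at hp
    have : (E \ B) \ (C \ B) = E \ C := by
      ext x; simp only [mem_sdiff]; have := @hp.2 x; tauto
    simp only [this, mul_assoc]

theorem subsetConv_add_left (f f' g : Finset α → R) :
    subsetConv (f + f') g = subsetConv f g + subsetConv f' g := by
  funext E
  simp only [subsetConv, Pi.add_apply, add_mul, sum_add_distrib]

theorem subsetConv_add_right (f g g' : Finset α → R) :
    subsetConv f (g + g') = subsetConv f g + subsetConv f g' := by
  rw [subsetConv_comm, subsetConv_add_left, subsetConv_comm g, subsetConv_comm g']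

theorem subsetConv_empty (hf : f ∅ = 1) (hg : g ∅ = 1) : subsetConv f g ∅ = 1 := by
  simp [subsetConv, hf, hg]

theorem pointed_add (t : α) (f g : Finset α → R) :
    pointed t (f + g) = pointed t f + pointed t g := by
  funext B
  by_cases ht : t ∈ B <;> simp [pointed, ht]

theorem pointed_subsetConv (t : α) (f g : Finset α → R) :
    pointed t (subsetConv f g) = subsetConv (pointed t f) g + subsetConv f (pointed t g) := by
  funext E
  simp only [pointed, subsetConv, Pi.add_apply, ← sum_add_distrib]
  split_ifs with ht
  · refine sum_congr rfl fun B _ => ?_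
    by_cases htB : t ∈ B <;> simp [htB, ht]
  · refine (sum_eq_zero fun B hB => ?_).symm
    have htB : t ∉ B := fun h => ht (mem_powerset.1 hB h)
    simp [htB, ht]

/-- Marking a block `C ∌ t` of a partition of `E` is the same as choosing the proper subset
`E \ C ∋ t` together with a partition of it. -/
theorem sum_sum_insert_sdiff_partitionsOf {t : α} (ht : t ∈ E)
    (F : Finset (Finset α) → Finset α → R) :
    ∑ B ∈ (E.powerset.filter (t ∈ ·)).erase E, ∑ P ∈ partitionsOf B, F (insert (E \ B) P) (E \ B) =
      ∑ Q ∈ partitionsOf E, ∑ C ∈ Q.filter (t ∉ ·), F Q C := by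
  rw [sum_sigma', sum_sigma']
  refine sum_nbij' (fun p => ⟨insert (E \ p.1) p.2, E \ p.1⟩) (fun q => ⟨E \ q.2, q.1.erase q.2⟩)
    ?_ ?_ ?_ ?_ (fun _ _ => rfl)
  · rintro ⟨B, P⟩ hp
    simp only [mem_sigma, mem_erase, mem_filter, mem_powerset] at hp ⊢
    have hBE : B ⊂ E := ssubset_of_subset_of_ne hp.1.2.1 hp.1.1
    exact ⟨insert_sdiff_mem_partitionsOf hp.2 hBE, mem_insert_self _ _,
      fun h => (mem_sdiff.1 h).2 hp.1.2.2⟩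
  · rintro ⟨Q, C⟩ hq
    simp only [mem_sigma, mem_filter] at hq
    obtain ⟨hQ, hCQ, htC⟩ := hq
    obtain ⟨x, hx⟩ := nonempty_of_mem_partitionsOf hQ hCQ
    simp only [mem_sigma, mem_erase, mem_filter, mem_powerset]
    refine ⟨⟨fun h => ?_, sdiff_subset, mem_sdiff.2 ⟨ht, htC⟩⟩, erase_mem_partitionsOf hQ hCQ⟩
    exact (mem_sdiff.1 (h.symm ▸ subset_of_mem_partitionsOf hQ hCQ hx)).2 hx
  · rintro ⟨B, P⟩ hp
    simp only [mem_sigma, mem_erase, mem_filter, mem_powerset] at hp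
    have hBE : B ⊂ E := ssubset_of_subset_of_ne hp.1.2.1 hp.1.1
    simp only [Finset.sdiff_sdiff_eq_self hBE.subset,
      erase_insert (sdiff_notMem_of_mem_partitionsOf hp.2 hBE)]
  · rintro ⟨Q, C⟩ hq
    simp only [mem_sigma, mem_filter] at hq
    simp only [Finset.sdiff_sdiff_eq_self (subset_of_mem_partitionsOf hq.1 hq.2.1),
      insert_erase hq.2.1]

theorem sum_cumulant_mul_sdiff (hf : f ∅ = 1) {t : α} (ht : t ∈ E) :
    ∑ B ∈ E.powerset.filter (t ∈ ·), cumulant f B * f (E \ B) = f E := by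
  have hE : E ∈ E.powerset.filter (t ∈ ·) := mem_filter.2 ⟨mem_powerset_self E, ht⟩
  have hproper : ∑ B ∈ (E.powerset.filter (t ∈ ·)).erase E, cumulant f B * f (E \ B) =
      ∑ Q ∈ partitionsOf E, ((#Q - 1 : ℕ) : R) * (partitionCoeff (#Q - 1) * ∏ C ∈ Q, f C) := by
    calc _ = ∑ B ∈ (E.powerset.filter (t ∈ ·)).erase E, ∑ P ∈ partitionsOf B,
          partitionCoeff (#(insert (E \ B) P) - 1) * ∏ C ∈ insert (E \ B) P, f C := by
          refine sum_congr rfl fun B hB => ?_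
          simp only [mem_erase, mem_filter, mem_powerset] at hB
          rw [cumulant, sum_mul]
          refine sum_congr rfl fun P hP => ?_
          have hnot := sdiff_notMem_of_mem_partitionsOf hP (ssubset_of_subset_of_ne hB.2.1 hB.1)
          rw [card_insert_of_notMem hnot, prod_insert hnot, Nat.add_sub_cancel]
          ring
      _ = ∑ Q ∈ partitionsOf E, ∑ D ∈ Q.filter (t ∉ ·), partitionCoeff (#Q - 1) * ∏ C ∈ Q, f C :=
          sum_sum_insert_sdiff_partitionsOf ht fun Q _ => partitionCoeff (#Q - 1) * ∏ C ∈ Q, f C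
      _ = _ := sum_congr rfl fun Q hQ => by
          have hcard := card_filter_add_card_filter_not (s := Q) (t ∈ ·)
          rw [card_filter_mem_of_mem_partitionsOf hQ ht] at hcard
          rw [sum_const, nsmul_eq_mul, show #(Q.filter (t ∉ ·)) = #Q - 1 by omega]
  rw [← add_sum_erase _ _ hE, Finset.sdiff_self, hf, mul_one, hproper, cumulant, ← sum_add_distrib,
    sum_eq_single_of_mem {E} (singleton_mem_partitionsOf ⟨t, ht⟩)]
  · simp [partitionCoeff]
  · intro Q hQ hQE
    have hQ1 : 1 ≤ #Q :=
      (card_filter_mem_of_mem_partitionsOf hQ ht).symm.trans_le (card_filter_le _ _)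
    rw [← mul_assoc, ← add_mul, partitionCoeff_add_mul hQ1,
      if_neg fun h => hQE (eq_singleton_of_mem_partitionsOf hQ h), zero_mul]

theorem subsetConv_pointed_cumulant (hf : f ∅ = 1) (t : α) :
    subsetConv (pointed t (cumulant f)) f = pointed t f := by
  funext E
  simp only [subsetConv, pointed, ite_mul, zero_mul]
  split_ifs with ht
  · rw [← sum_filter, sum_cumulant_mul_sdiff hf ht]
  · exact sum_eq_zero fun B hB => if_neg fun htB => ht (mem_powerset.1 hB htB)

theorem eq_cumulant_of_subsetConv_pointed {c : Finset α → R} (h0 : h ∅ = 1)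
    (hc : ∀ t, subsetConv (pointed t c) h = pointed t h) (hE : E.Nonempty) :
    c E = cumulant h E := by
  induction E using Finset.strongInduction with
  | H E ih =>
  obtain ⟨t, ht⟩ := hE
  have hproper : ∀ B ∈ E.powerset.erase E,
      pointed t c B * h (E \ B) = pointed t (cumulant h) B * h (E \ B) := by
    intro B hB
    obtain ⟨hBE, hB⟩ := mem_erase.1 hB
    by_cases htB : t ∈ B
    · rw [pointed, pointed, if_pos htB, if_pos htB,
        ih B (ssubset_of_subset_of_ne (mem_powerset.1 hB) hBE) ⟨t, htB⟩]
    · simp [pointed, htB]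
  have := congr_fun ((hc t).trans (subsetConv_pointed_cumulant h0 t).symm) E
  rw [subsetConv, subsetConv, ← add_sum_erase _ _ (mem_powerset_self E),
    ← add_sum_erase _ _ (mem_powerset_self E), sum_congr rfl hproper, add_left_inj,
    Finset.sdiff_self, h0, mul_one, mul_one] at this
  simpa [pointed, ht] using this

theorem cumulant_subsetConv (hf : f ∅ = 1) (hg : g ∅ = 1) (hE : E.Nonempty) :
    cumulant (subsetConv f g) E = cumulant f E + cumulant g E := by
  refine (eq_cumulant_of_subsetConv_pointed (c := cumulant f + cumulant g) (subsetConv_empty hf hg)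
    (fun t => ?_) hE).symm
  calc subsetConv (pointed t (cumulant f + cumulant g)) (subsetConv f g)
      = subsetConv (subsetConv (pointed t (cumulant f)) f) g
          + subsetConv (subsetConv (pointed t (cumulant g)) g) f := by
        rw [pointed_add, subsetConv_add_left, subsetConv_assoc, subsetConv_assoc,
          subsetConv_comm f g]
    _ = pointed t (subsetConv f g) := by
        rw [subsetConv_pointed_cumulant hf, subsetConv_pointed_cumulant hg, pointed_subsetConv,
          subsetConv_comm (pointed t g)]

theorem subsetConv_sum_erase (p : α → Prop) [DecidablePred p]
    (φ : α → Finset α → R) (g : Finset α → R) (E : Finset α) :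
    subsetConv (fun B => ∑ t ∈ B.filter p, φ t (B.erase t)) g E =
      ∑ t ∈ E.filter p, subsetConv (φ t) g (E.erase t) := by
  simp only [subsetConv, sum_mul]
  rw [sum_comm' (t' := E.filter p) (s' := fun t => E.powerset.filter (t ∈ ·)) fun B t => by
    simp only [mem_filter, mem_powerset]
    exact ⟨fun h => ⟨⟨h.1, h.2.1⟩, h.1 h.2.1, h.2.2⟩, fun h => ⟨h.1.1, h.1.2, h.2.2⟩⟩]
  refine sum_congr rfl fun t ht => ?_
  have htE := (mem_filter.1 ht).1
  refine sum_nbij' (·.erase t) (insert t) (fun B hB => ?_) (fun D hD => ?_) (fun B hB => ?_)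
    (fun D hD => ?_) (fun B hB => ?_)
  · simp only [mem_filter, mem_powerset] at hB ⊢
    exact erase_subset_erase t hB.1
  · simp only [mem_filter, mem_powerset] at hD ⊢
    exact ⟨insert_subset htE (hD.trans (erase_subset t E)), mem_insert_self t D⟩
  · exact insert_erase (mem_filter.1 hB).2
  · exact erase_insert fun h => (mem_erase.1 (mem_powerset.1 hD h)).1 rfl
  · obtain ⟨-, htB⟩ := mem_filter.1 hB
    congr 2
    ext x
    simp only [mem_sdiff, mem_erase]
    by_cases hx : x = t <;> simp [hx, htB]

end SetFunctions

theorem eq_of_add_eq_of_add_single {ι β : Type*} [DecidableEq ι] {Φ : (ι → ℤ) → (ι → ℤ) → β}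
    (L : Finset ι) (hL : ∀ x x' y y', Set.EqOn x x' L → Set.EqOn y y' L → Φ x y = Φ x' y')
    (hΦ : ∀ i x y, Φ (x + Pi.single i 1) y = Φ x (y + Pi.single i 1))
    {x y x' y' : ι → ℤ} (h : x + y = x' + y') : Φ x y = Φ x' y' := by
  let G : AddSubgroup (ι → ℤ) :=
    { carrier := {d | ∀ x y, Φ (x + d) y = Φ x (y + d)}
      zero_mem' := by simp
      add_mem' := fun {d e} hd he x y => by
        rw [← add_assoc, he, hd, add_assoc, add_comm e]
      neg_mem' := fun {d} hd x y => by
        simpa using (hd (x + -d) (y + -d)).symm }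
  set d := ∑ i ∈ L, (x' i - x i) • Pi.single i (1 : ℤ)
  have hd : d ∈ G := G.sum_mem fun i _ => G.zsmul_mem (hΦ i) _
  have hdL : ∀ i ∈ L, d i = x' i - x i := fun i hi => by simp [d, Pi.single_apply, hi]
  have hy : ∀ i, y i = y' i + (x' i - x i) := fun i => by
    have := congr_fun h i
    simp only [Pi.add_apply] at this
    linarith
  calc Φ x y = Φ x (y' + d) := hL _ _ _ _ (Set.eqOn_refl _ _) fun i hi => by
        simp [hdL i hi, hy i]
    _ = Φ (x + d) y' := (hd x y').symm
    _ = Φ x' y' := hL _ _ _ _ (fun i hi => by simp [hdL i hi]) (Set.eqOn_refl _ _)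

theorem eq_mul_add_of_add_add_two {R : Type*} [CommRing R] {f : ℕ → R}
    (hf : ∀ k, f k + f (k + 2) = 2 * f (k + 1)) (k : ℕ) : f k = (f 1 - f 0) * k + f 0 := by
  have hstep : ∀ k, f (k + 1) - f k = f 1 - f 0 := by
    intro k
    induction k with
    | zero => rfl
    | succ k ih => linear_combination hf k + ih
  induction k with
  | zero => simp
  | succ k ih =>
    push_cast
    linear_combination ih + hstep k

theorem descPochhammer_eval_add_one {R : Type*} [CommRing R] (m : ℕ) (v : R) :
    (descPochhammer R (m + 1)).eval (v + 1) =
      (descPochhammer R (m + 1)).eval v + (m + 1) * (descPochhammer R m).eval v := by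
  rw [descPochhammer_succ_eval m v, descPochhammer_succ_left]
  simp only [Polynomial.eval_mul, Polynomial.eval_X, Polynomial.eval_comp, Polynomial.eval_sub,
    Polynomial.eval_one, add_sub_cancel_right]
  ring

theorem prod_descPochhammer_eval_add_single {ι R : Type*} [CommRing R] [DecidableEq ι]
    {J : Finset ι} {i : ι} (hi : i ∈ J) (m : ι → ℕ) (u : ι → R) :
    ∏ j ∈ J, (descPochhammer R ((m + Pi.single i 1 : ι → ℕ) j)).eval
        ((u + Pi.single i 1 : ι → R) j) =
      ∏ j ∈ J, (descPochhammer R ((m + Pi.single i 1 : ι → ℕ) j)).eval (u j) +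
        (m i + 1) * ∏ j ∈ J, (descPochhammer R (m j)).eval (u j) := by
  set p := ∏ j ∈ J.erase i, (descPochhammer R (m j)).eval (u j)
  have hp : ∀ v : ι → R, (∀ j ∈ J.erase i, v j = u j) →
      ∏ j ∈ J.erase i, (descPochhammer R ((m + Pi.single i 1 : ι → ℕ) j)).eval (v j) = p :=
    fun v hv => prod_congr rfl fun j hj => by
      simp [hv j hj, Pi.single_eq_of_ne (ne_of_mem_erase hj)]
  rw [← mul_prod_erase J _ hi, ← mul_prod_erase J _ hi, ← mul_prod_erase J _ hi,
    hp _ fun j hj => by simp [Pi.single_eq_of_ne (ne_of_mem_erase hj)], hp u fun _ _ => rfl]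
  simp only [Pi.add_apply, Pi.single_eq_same, descPochhammer_eval_add_one]
  ring

section Family

variable {T : Type} (a b w Δ : T → ℕ)

def weightProfile (t : T) (i : ℕ) : ℤ := if a t ≤ i ∧ i < b t then (w t : ℤ) else 0

def level (x : ℕ → ℤ) (B : Finset T) (i : ℕ) : ℤ := x i - wOf a b w B i + mOf Δ B i

/-- With the level-dependent offset `x = fun i => k + i` this is `NstarOffset a b w Δ k`; a general
`x` lets offset be moved between the two factors of a convolution one level at a time. -/
noncomputable def orderingCount (x : ℕ → ℤ) (B : Finset T) : ℤ :=
  ∏ᶠ i, (descPochhammer ℤ (mOf Δ B i)).eval (level a b w Δ x B i)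

variable {a b w Δ} {B : Finset T} {t : T}

theorem mOf_eq_zero {i : ℕ} (hi : i ∉ B.image Δ) : mOf Δ B i = 0 :=
  card_eq_zero.2 <| filter_eq_empty_iff.2 fun t ht hti => hi (mem_image.2 ⟨t, ht, hti⟩)

theorem mOf_erase_add (ht : t ∈ B) : mOf Δ (B.erase t) + Pi.single (Δ t) 1 = mOf Δ B := by
  funext i
  simp only [mOf, Pi.add_apply, filter_erase, Pi.single_apply]
  split_ifs with hti
  · exact card_erase_add_one (mem_filter.2 ⟨ht, hti.symm⟩)
  · rw [add_zero, erase_eq_of_notMem fun h => hti (mem_filter.1 h).2.symm]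

theorem wOf_erase_add (ht : t ∈ B) (i : ℕ) :
    (wOf a b w (B.erase t) i : ℤ) + weightProfile a b w t i = wOf a b w B i := by
  simp only [wOf, weightProfile, filter_erase]
  split_ifs with hti
  · rw [← Nat.cast_add, sum_erase_add _ _ (mem_filter.2 ⟨ht, hti⟩)]
  · rw [add_zero, erase_eq_of_notMem (a := t) fun h => hti (mem_filter.1 h).2]

theorem level_add_single (x : ℕ → ℤ) (i : ℕ) :
    level a b w Δ (x + Pi.single i 1) B = level a b w Δ x B + Pi.single i 1 := by
  funext j
  simp only [level, Pi.add_apply]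
  ring

theorem level_erase (ht : t ∈ B) (x : ℕ → ℤ) :
    level a b w Δ (x - weightProfile a b w t + Pi.single (Δ t) 1) (B.erase t) =
      level a b w Δ x B := by
  funext i
  have hm := congr_fun (mOf_erase_add (Δ := Δ) ht) i
  simp only [level, ← hm, ← wOf_erase_add ht i, Pi.add_apply, Pi.sub_apply, Nat.cast_add]
  by_cases hi : i = Δ t
  · subst hi; simp only [Pi.single_eq_same]; push_cast; ring
  · simp only [Pi.single_eq_of_ne hi]; push_cast; ring

theorem orderingCount_eq_prod {J : Finset ℕ} (hJ : B.image Δ ⊆ J) (x : ℕ → ℤ) :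
    orderingCount a b w Δ x B =
      ∏ i ∈ J, (descPochhammer ℤ (mOf Δ B i)).eval (level a b w Δ x B i) :=
  finprod_eq_prod_of_mulSupport_subset _ fun i hi => by
    by_contra hiJ
    exact hi (by
      dsimp only
      rw [mOf_eq_zero fun h => hiJ (hJ h), descPochhammer_zero, Polynomial.eval_one])

theorem orderingCount_empty (x : ℕ → ℤ) : orderingCount a b w Δ x ∅ = 1 := by
  rw [orderingCount_eq_prod (J := ∅) (by simp), prod_empty]

theorem orderingCount_congr {x x' : ℕ → ℤ} (h : Set.EqOn x x' (B.image Δ)) :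
    orderingCount a b w Δ x B = orderingCount a b w Δ x' B := by
  rw [orderingCount_eq_prod subset_rfl, orderingCount_eq_prod subset_rfl]
  exact prod_congr rfl fun i hi => by simp only [level, h hi]

/-- By `level_erase` every summand is the product for `B` with the exponent at level `i` lowered
by one, so this is `(v + 1)_m - (v)_m = m (v)_{m-1}` at level `i`. -/
theorem orderingCount_add_single (x : ℕ → ℤ) (B : Finset T) (i : ℕ) :
    orderingCount a b w Δ (x + Pi.single i 1) B = orderingCount a b w Δ x B +
      ∑ t ∈ B.filter (Δ · = i),
        orderingCount a b w Δ (x - weightProfile a b w t + Pi.single i 1) (B.erase t) := by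
  rcases (B.filter (Δ · = i)).eq_empty_or_nonempty with hempty | ⟨t₀, ht₀⟩
  · rw [hempty, sum_empty, add_zero]
    refine orderingCount_congr fun j hj => ?_
    have hji : j ≠ i := by
      rintro rfl
      obtain ⟨t, ht, rfl⟩ := mem_image.1 hj
      exact (filter_eq_empty_iff.1 hempty) ht rfl
    simp [Pi.single_eq_of_ne hji]
  obtain ⟨ht₀B, rfl⟩ := mem_filter.1 ht₀
  have hm : ∀ t ∈ B.filter (Δ · = Δ t₀), mOf Δ (B.erase t) = mOf Δ (B.erase t₀) := by
    intro t ht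
    obtain ⟨htB, hΔt⟩ := mem_filter.1 ht
    apply add_right_cancel (b := Pi.single (Δ t₀) 1)
    rw [mOf_erase_add ht₀B, ← hΔt, mOf_erase_add htB]
  rw [sum_congr rfl fun t ht => by
      rw [orderingCount_eq_prod (image_subset_image (erase_subset t B)), ← (mem_filter.1 ht).2,
        level_erase (mem_filter.1 ht).1, hm t ht],
    sum_const, orderingCount_eq_prod subset_rfl, orderingCount_eq_prod subset_rfl,
    level_add_single, ← mOf_erase_add ht₀B,
    prod_descPochhammer_eval_add_single (mem_image_of_mem Δ ht₀B)]
  have hcard : #(B.filter (Δ · = Δ t₀)) = mOf Δ (B.erase t₀) (Δ t₀) + 1 := by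
    have := congr_fun (mOf_erase_add (Δ := Δ) ht₀B) (Δ t₀)
    rw [Pi.add_apply, Pi.single_eq_same] at this
    exact this.symm
  rw [hcard, nsmul_eq_mul]
  push_cast
  ring

theorem subsetConv_orderingCount_add_single {E : Finset T}
    (hE : ∀ t ∈ E, ∀ x y x' y' : ℕ → ℤ, x + y = x' + y' →
      subsetConv (orderingCount a b w Δ x) (orderingCount a b w Δ y) (E.erase t) =
        subsetConv (orderingCount a b w Δ x') (orderingCount a b w Δ y') (E.erase t))
    (i : ℕ) (x y : ℕ → ℤ) :
    subsetConv (orderingCount a b w Δ (x + Pi.single i 1)) (orderingCount a b w Δ y) E =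
      subsetConv (orderingCount a b w Δ x) (orderingCount a b w Δ (y + Pi.single i 1)) E := by
  have hN : ∀ z, orderingCount a b w Δ (z + Pi.single i 1) = orderingCount a b w Δ z +
      fun B => ∑ t ∈ B.filter (Δ · = i),
        orderingCount a b w Δ (z - weightProfile a b w t + Pi.single i 1) (B.erase t) :=
    fun z => funext fun B => orderingCount_add_single z B i
  rw [hN, hN, subsetConv_add_left, subsetConv_add_right, Pi.add_apply, Pi.add_apply,
    add_right_inj, subsetConv_comm (orderingCount a b w Δ x), subsetConv_sum_erase,
    subsetConv_sum_erase]
  refine sum_congr rfl fun t ht => ?_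
  rw [subsetConv_comm (orderingCount a b w Δ _)]
  exact hE t (mem_filter.1 ht).1 _ _ _ _ (by abel)

theorem subsetConv_orderingCount_eq_of_add_eq (E : Finset T) {x y x' y' : ℕ → ℤ}
    (h : x + y = x' + y') :
    subsetConv (orderingCount a b w Δ x) (orderingCount a b w Δ y) E =
      subsetConv (orderingCount a b w Δ x') (orderingCount a b w Δ y') E := by
  induction E using Finset.strongInduction generalizing x y x' y' with
  | H E ih =>
  refine eq_of_add_eq_of_add_single (Φ := fun x y => subsetConv (orderingCount a b w Δ x)
    (orderingCount a b w Δ y) E) (E.image Δ) (fun x x' y y' hx hy => ?_)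
    (subsetConv_orderingCount_add_single fun t ht _ _ _ _ => ih _ (erase_ssubset ht)) h
  refine sum_congr rfl fun B hB => ?_
  rw [orderingCount_congr (hx.mono (coe_subset.2 (image_subset_image (mem_powerset.1 hB)))),
    orderingCount_congr (hy.mono (coe_subset.2 (image_subset_image sdiff_subset)))]

theorem filter_isPartitionOfUniv [Fintype T] :
    univ.filter IsPartitionOfUniv = partitionsOf (univ : Finset T) := by
  ext P
  rw [mem_filter, mem_partitionsOf]
  constructor
  · rintro ⟨-, hne, huniq⟩
    exact ⟨.ofExistsUnique P (fun _ _ => subset_univ _) (fun x _ => huniq x)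
      fun h => not_nonempty_empty (hne ∅ h), rfl⟩
  · rintro ⟨Q, rfl⟩
    exact ⟨mem_univ _, fun _ => Q.nonempty_of_mem_parts, fun x => Q.existsUnique_mem (mem_univ x)⟩

end Family

end LongEdgeFamily

open LongEdgeFamily

theorem Qstar_offset_linear_general (T : Type) [Fintype T] [Nonempty T]
    (a b w Δ : T → ℕ) :
    ∃ A B : ℤ, ∀ k : ℕ,
      (∑ P : Finset (Finset T),
        if IsPartitionOfUniv P then
          (-1 : ℤ) ^ (P.card - 1) * (Nat.factorial (P.card - 1) : ℤ) *
            ∏ E ∈ P, NstarOffset a b w Δ k E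
        else 0)
      = A * (k : ℤ) + B := by
  let N : ℕ → Finset T → ℤ := fun k => orderingCount a b w Δ fun i => (k : ℤ) + i
  let Q : ℕ → ℤ := fun k => cumulant (N k) univ
  have hconv : ∀ k, subsetConv (N k) (N (k + 2)) = subsetConv (N (k + 1)) (N (k + 1)) :=
    fun k => funext fun E => subsetConv_orderingCount_eq_of_add_eq E (by
      ext i; simp only [Pi.add_apply]; push_cast; ring)
  have hadd : ∀ k l, cumulant (subsetConv (N k) (N l)) univ = Q k + Q l := fun k l =>
    cumulant_subsetConv (orderingCount_empty _) (orderingCount_empty _) univ_nonempty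
  have hrec : ∀ k, Q k + Q (k + 2) = 2 * Q (k + 1) := fun k => by
    rw [← hadd, hconv, hadd, two_mul]
  refine ⟨Q 1 - Q 0, Q 0, fun k => ?_⟩
  rw [← sum_filter, filter_isPartitionOfUniv]
  show Q k = _
  exact eq_mul_add_of_add_add_two hrec k

/-- `Q̃_*(k) = ∑_P (−1)^{|P|−1}(|P|−1)! ∏_{E ∈ P} N_*` is linear in the offset `k`. -/
theorem Qstar_offset_linear (T : Type) [Fintype T] [Nonempty T]
    (a b w Δ : T → ℕ)
    (hab : ∀ t, a t < b t) (hw : ∀ t, 1 ≤ w t)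
    (hlong : ∀ t, ¬ (b t = a t + 1 ∧ w t = 1))
    (hΔ : ∀ t, a t ≤ Δ t ∧ Δ t < b t) :
    ∃ A B : ℤ, ∀ k : ℕ,
      (∑ P : Finset (Finset T),
        if IsPartitionOfUniv P then
          (-1 : ℤ) ^ (P.card - 1) * (Nat.factorial (P.card - 1) : ℤ) *
            ∏ E ∈ P, NstarOffset a b w Δ k E
        else 0)
      = A * (k : ℤ) + B :=
  Qstar_offset_linear_general T a b w Δ
end

section
/- Every nonempty long-edge graph G can be expressed in exactly one way as a multiset sum G = Γ_1 + Γ_2 + ⋯ + Γ_r of nonempty offset templates satisfying R(Γ_j) ≤ L(Γ_{j+1}) for all 1 ≤ j < r. That is, such a decomposition exists, and if Γ_1 + ⋯ + Γ_r = Γ'_1 + ⋯ + Γ'_s are two decompositions into nonempty offset templates with R(Γ_j) ≤ L(Γ_{j+1}) for all j < r and R(Γ'_j) ≤ L(Γ'_{j+1}) for all j < s, then r = s and Γ_j = Γ'_j for all j. -/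
/-- An edge `(a, b, w)` with `a < b` and `w ≥ 1` which is not short
(i.e. not both `b = a + 1` and `w = 1`). -/
def IsLongEdge (e : ℕ × ℕ × ℕ) : Prop :=
  e.1 < e.2.1 ∧ 1 ≤ e.2.2 ∧ ¬ (e.2.1 = e.1 + 1 ∧ e.2.2 = 1)

/-- A long-edge graph: a finite multiset of edges, none of which is short. -/
def IsLongEdgeGraph (G : Multiset (ℕ × ℕ × ℕ)) : Prop :=
  ∀ e ∈ G, IsLongEdge e

/-- `L(G)`: the minimum left endpoint of an edge of `G`. -/
noncomputable def legL (G : Multiset (ℕ × ℕ × ℕ)) : ℕ :=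
  sInf {n | ∃ e ∈ G, (e : ℕ × ℕ × ℕ).1 = n}

/-- `R(G)`: the maximum right endpoint of an edge of `G`. -/
noncomputable def legR (G : Multiset (ℕ × ℕ × ℕ)) : ℕ :=
  sSup {n | ∃ e ∈ G, (e : ℕ × ℕ × ℕ).2.1 = n}

/-- The vertex `v` is covered by `G`. -/
def Covers (G : Multiset (ℕ × ℕ × ℕ)) (v : ℕ) : Prop :=
  ∃ e ∈ G, (e : ℕ × ℕ × ℕ).1 < v ∧ v < e.2.1

/-- A nonempty long-edge graph all of whose internal vertices are covered. -/
def IsOffsetTemplate (Γ : Multiset (ℕ × ℕ × ℕ)) : Prop :=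
  IsLongEdgeGraph Γ ∧ Γ ≠ 0 ∧ ∀ v : ℕ, legL Γ < v → v < legR Γ → Covers Γ v

/-! Call a vertex `n > L(G)` that no edge of `G` passes over a cut of `G`. In a decomposition
`Γ_1 + ⋯ + Γ_r` of `G`, the vertex `R(Γ_1)` is a cut, and it is the least one, because `Γ_1`
covers every vertex strictly between `L(G) = L(Γ_1)` and `R(Γ_1)`. Hence `Γ_1` consists exactly of
the edges of `G` that start before the least cut of `G`; conversely these edges always form an
offset template. Induction on the number of edges gives existence and uniqueness together. -/

section Endpoints

variable {G H : Multiset (ℕ × ℕ × ℕ)} {e : ℕ × ℕ × ℕ} {n : ℕ}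

theorem legL_le_of_mem (he : e ∈ G) : legL G ≤ e.1 :=
  Nat.sInf_le ⟨e, he, rfl⟩

theorem exists_mem_fst_eq_legL (hne : G ≠ 0) : ∃ e ∈ G, e.1 = legL G := by
  obtain ⟨e, he⟩ := Multiset.exists_mem_of_ne_zero hne
  exact Nat.sInf_mem (⟨e.1, e, he, rfl⟩ : {n | ∃ e ∈ G, e.1 = n}.Nonempty)

theorem le_legL_of_forall (hne : G ≠ 0) (h : ∀ e ∈ G, n ≤ e.1) : n ≤ legL G := by
  obtain ⟨e, he, hL⟩ := exists_mem_fst_eq_legL hne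
  exact hL ▸ h e he

theorem le_legR_of_mem (he : e ∈ G) : e.2.1 ≤ legR G :=
  le_csSup (((G.finite_toSet.image fun e => e.2.1).subset
    (by rintro _ ⟨e, he, rfl⟩; exact ⟨e, he, rfl⟩)).bddAbove) ⟨e, he, rfl⟩

theorem legR_le_of_forall (h : ∀ e ∈ G, e.2.1 ≤ n) : legR G ≤ n :=
  csSup_le' (by rintro _ ⟨e, he, rfl⟩; exact h e he)

theorem legL_lt_legR (hG : IsLongEdgeGraph G) (hne : G ≠ 0) : legL G < legR G := by
  obtain ⟨e, he, hL⟩ := exists_mem_fst_eq_legL hne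
  calc legL G = e.1 := hL.symm
    _ < e.2.1 := (hG e he).1
    _ ≤ legR G := le_legR_of_mem he

theorem IsLongEdgeGraph.mono (hG : IsLongEdgeGraph G) (hHG : H ≤ G) : IsLongEdgeGraph H :=
  fun e he => hG e (Multiset.mem_of_le hHG he)

theorem Covers.mono {v : ℕ} (hH : Covers H v) (hHG : H ≤ G) : Covers G v :=
  let ⟨e, he, hv⟩ := hH
  ⟨e, Multiset.mem_of_le hHG he, hv⟩

end Endpoints

section FirstCut

variable {G : Multiset (ℕ × ℕ × ℕ)} {e : ℕ × ℕ × ℕ}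

noncomputable def firstCut (G : Multiset (ℕ × ℕ × ℕ)) : ℕ :=
  sInf {n | legL G < n ∧ ¬ Covers G n}

theorem firstCut_spec {n : ℕ} (hL : legL G < n) (hn : ¬ Covers G n) :
    legL G < firstCut G ∧ ¬ Covers G (firstCut G) :=
  Nat.sInf_mem (⟨n, hL, hn⟩ : {n | legL G < n ∧ ¬ Covers G n}.Nonempty)

theorem not_covers_legR : ¬ Covers G (legR G) :=
  fun ⟨_, he, _, hR⟩ => (le_legR_of_mem he).not_gt hR

theorem legL_lt_firstCut_and_not_covers (hG : IsLongEdgeGraph G) (hne : G ≠ 0) :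
    legL G < firstCut G ∧ ¬ Covers G (firstCut G) :=
  firstCut_spec (legL_lt_legR hG hne) not_covers_legR

theorem firstCut_le {n : ℕ} (hL : legL G < n) (hn : ¬ Covers G n) : firstCut G ≤ n :=
  Nat.sInf_le ⟨hL, hn⟩

theorem covers_of_lt_firstCut {v : ℕ} (hL : legL G < v) (hv : v < firstCut G) : Covers G v :=
  by_contra fun h => (firstCut_le hL h).not_gt hv

noncomputable def headPart (G : Multiset (ℕ × ℕ × ℕ)) : Multiset (ℕ × ℕ × ℕ) :=
  G.filter (·.1 < firstCut G)

noncomputable def tailPart (G : Multiset (ℕ × ℕ × ℕ)) : Multiset (ℕ × ℕ × ℕ) :=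
  G.filter (¬ ·.1 < firstCut G)

theorem headPart_add_tailPart (G : Multiset (ℕ × ℕ × ℕ)) : headPart G + tailPart G = G :=
  Multiset.filter_add_not _ _

theorem snd_le_firstCut_of_mem_headPart (hG : IsLongEdgeGraph G) (hne : G ≠ 0)
    (he : e ∈ headPart G) : e.2.1 ≤ firstCut G := by
  obtain ⟨heG, hc⟩ := Multiset.mem_filter.1 he
  by_contra! h
  exact (legL_lt_firstCut_and_not_covers hG hne).2 ⟨e, heG, hc, h⟩

theorem firstCut_le_fst_of_mem_tailPart (he : e ∈ tailPart G) : firstCut G ≤ e.1 :=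
  not_lt.1 (Multiset.mem_filter.1 he).2

theorem headPart_ne_zero (hG : IsLongEdgeGraph G) (hne : G ≠ 0) : headPart G ≠ 0 := by
  obtain ⟨e, he, hL⟩ := exists_mem_fst_eq_legL hne
  have hc := (legL_lt_firstCut_and_not_covers hG hne).1
  have hmem : e ∈ headPart G := Multiset.mem_filter.2 ⟨he, hL ▸ hc⟩
  rintro h0
  simp [h0] at hmem

theorem isOffsetTemplate_headPart (hG : IsLongEdgeGraph G) (hne : G ≠ 0) :
    IsOffsetTemplate (headPart G) := by
  have hA := headPart_ne_zero hG hne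
  refine ⟨hG.mono (Multiset.filter_le _ _), hA, fun v hLv hvR => ?_⟩
  have hLG : legL G ≤ legL (headPart G) :=
    le_legL_of_forall hA fun e he => legL_le_of_mem (Multiset.mem_of_le (Multiset.filter_le _ _) he)
  have hRc : legR (headPart G) ≤ firstCut G :=
    legR_le_of_forall fun e he => snd_le_firstCut_of_mem_headPart hG hne he
  obtain ⟨e, he, hev, hve⟩ := covers_of_lt_firstCut (G := G) (v := v) (by omega) (by omega)
  exact ⟨e, Multiset.mem_filter.2 ⟨he, by omega⟩, hev, hve⟩

theorem card_tailPart_lt (hG : IsLongEdgeGraph G) (hne : G ≠ 0) :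
    Multiset.card (tailPart G) < Multiset.card G := by
  have hsum := congrArg Multiset.card (headPart_add_tailPart G)
  have hpos := Multiset.card_pos.2 (headPart_ne_zero hG hne)
  rw [Multiset.card_add] at hsum
  omega

theorem eq_headPart_of_add {A B : Multiset (ℕ × ℕ × ℕ)} (hA : IsOffsetTemplate A)
    (hB : ∀ e ∈ B, legR A ≤ e.1) : A = headPart (A + B) ∧ B = tailPart (A + B) := by
  have hLR := legL_lt_legR hA.1 hA.2.1
  have hedge : ∀ e ∈ A, e.1 < legR A := fun e he => (hA.1 e he).1.trans_le (le_legR_of_mem he)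
  have hL : legL (A + B) = legL A := by
    refine le_antisymm ?_ (le_legL_of_forall (by simp [hA.2.1]) fun e he => ?_)
    · obtain ⟨e, he, hLe⟩ := exists_mem_fst_eq_legL hA.2.1
      exact hLe ▸ legL_le_of_mem (Multiset.mem_add.2 (Or.inl he))
    · rcases Multiset.mem_add.1 he with he | he
      exacts [legL_le_of_mem he, hLR.le.trans (hB e he)]
  have hRA : ¬ Covers (A + B) (legR A) := by
    rintro ⟨e, he, hea, hae⟩
    rcases Multiset.mem_add.1 he with he | he
    exacts [(le_legR_of_mem he).not_gt hae, (hB e he).not_gt hea]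
  -- `legR A` is a cut, and `A` covers everything between `legL A` and `legR A`
  have hcut : firstCut (A + B) = legR A := by
    refine le_antisymm (firstCut_le (hL ▸ hLR) hRA) (not_lt.1 fun hlt => ?_)
    have hspec := firstCut_spec (hL ▸ hLR) hRA
    exact hspec.2 ((hA.2.2 _ (hL ▸ hspec.1) hlt).mono (Multiset.le_add_right A B))
  have hhead : headPart (A + B) = A := by
    rw [headPart, hcut, Multiset.filter_add, Multiset.filter_eq_self.2 hedge,
      Multiset.filter_eq_nil.2 fun e he => (hB e he).not_gt, add_zero]
  refine ⟨hhead.symm, add_left_cancel (a := A) ?_⟩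
  conv_lhs => rw [← headPart_add_tailPart (A + B), hhead]

theorem le_fst_of_mem_sum_of_isChain {Γ : Multiset (ℕ × ℕ × ℕ)} {t : List (Multiset (ℕ × ℕ × ℕ))}
    (ht : ∀ Γ' ∈ t, IsOffsetTemplate Γ') (hc : (Γ :: t).IsChain fun Γ Γ' => legR Γ ≤ legL Γ') :
    ∀ e ∈ t.sum, legR Γ ≤ e.1 := by
  induction t generalizing Γ with
  | nil => simp
  | cons Γ' t ih =>
    obtain ⟨hΓΓ', hc'⟩ := List.isChain_cons_cons.1 hc
    have hΓ' := ht Γ' List.mem_cons_self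
    have hLR' := legL_lt_legR hΓ'.1 hΓ'.2.1
    intro e he
    rw [List.sum_cons, Multiset.mem_add] at he
    rcases he with he | he
    · exact hΓΓ'.trans (legL_le_of_mem he)
    · exact (hΓΓ'.trans hLR'.le).trans (ih (fun x hx => ht x (List.mem_cons_of_mem _ hx)) hc' e he)

end FirstCut

def IsDecomposition (l : List (Multiset (ℕ × ℕ × ℕ))) (G : Multiset (ℕ × ℕ × ℕ)) : Prop :=
  (∀ Γ ∈ l, IsOffsetTemplate Γ) ∧ l.sum = G ∧ l.IsChain fun Γ Γ' => legR Γ ≤ legL Γ'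

theorem eq_nil_of_isDecomposition_zero {l : List (Multiset (ℕ × ℕ × ℕ))}
    (hl : IsDecomposition l 0) : l = [] :=
  List.eq_nil_iff_forall_not_mem.2 fun Γ hΓ =>
    (hl.1 Γ hΓ).2.1 (Multiset.le_zero.1 (hl.2.1 ▸ List.le_sum_of_mem hΓ))

theorem isDecomposition_cons_iff {G Γ : Multiset (ℕ × ℕ × ℕ)} {t : List (Multiset (ℕ × ℕ × ℕ))}
    (hG : IsLongEdgeGraph G) (hne : G ≠ 0) :
    IsDecomposition (Γ :: t) G ↔ Γ = headPart G ∧ IsDecomposition t (tailPart G) := by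
  constructor
  · rintro ⟨htemp, hsum, hc⟩
    have hsplit := eq_headPart_of_add (htemp Γ List.mem_cons_self)
      (le_fst_of_mem_sum_of_isChain (fun x hx => htemp x (List.mem_cons_of_mem _ hx)) hc)
    rw [← List.sum_cons, hsum] at hsplit
    exact ⟨hsplit.1, fun x hx => htemp x (List.mem_cons_of_mem _ hx), hsplit.2, hc.tail⟩
  · rintro ⟨rfl, htemp, hsum, hc⟩
    refine ⟨?_, by rw [List.sum_cons, hsum, headPart_add_tailPart], List.isChain_cons.2 ⟨?_, hc⟩⟩
    · rintro Γ (_ | ⟨_, hΓ⟩)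
      exacts [isOffsetTemplate_headPart hG hne, htemp Γ hΓ]
    · intro Γ hΓ
      replace hΓ := List.mem_of_mem_head? hΓ
      calc legR (headPart G) ≤ firstCut G :=
            legR_le_of_forall fun e he => snd_le_firstCut_of_mem_headPart hG hne he
        _ ≤ legL Γ := le_legL_of_forall (htemp Γ hΓ).2.1 fun e he =>
            firstCut_le_fst_of_mem_tailPart (Multiset.mem_of_le (hsum ▸ List.le_sum_of_mem hΓ) he)

theorem longEdgeGraph_unique_decomposition_general (G : Multiset (ℕ × ℕ × ℕ))
    (hG : IsLongEdgeGraph G) :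
    ∃! l : List (Multiset (ℕ × ℕ × ℕ)),
      (∀ Γ ∈ l, IsOffsetTemplate Γ) ∧ l.sum = G ∧
        l.Chain' (fun Γ Γ' => legR Γ ≤ legL Γ') := by
  induction hn : Multiset.card G using Nat.strong_induction_on generalizing G with
  | _ n ih =>
    rcases eq_or_ne G 0 with rfl | hne
    · exact ⟨[], ⟨by simp, by simp, List.isChain_nil⟩,
        fun l hl => eq_nil_of_isDecomposition_zero hl⟩
    obtain ⟨t, ht, huniq⟩ :=
      ih _ (hn ▸ card_tailPart_lt hG hne) (tailPart G) (hG.mono (Multiset.filter_le _ _)) rfl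
    refine ⟨headPart G :: t, (isDecomposition_cons_iff hG hne).2 ⟨rfl, ht⟩, ?_⟩
    rintro (_ | ⟨Γ, t'⟩) hl
    · exact absurd hl.2.1.symm hne
    · obtain ⟨rfl, ht'⟩ := (isDecomposition_cons_iff hG hne).1 hl
      rw [huniq t' ht']

/-- Every nonempty long-edge graph decomposes uniquely as an ordered sum of
offset templates `Γ_1, …, Γ_r` with `R(Γ_j) ≤ L(Γ_{j+1})`. -/
theorem longEdgeGraph_unique_decomposition (G : Multiset (ℕ × ℕ × ℕ))
    (hG : IsLongEdgeGraph G) (hne : G ≠ 0) :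
    ∃! l : List (Multiset (ℕ × ℕ × ℕ)),
      (∀ Γ ∈ l, IsOffsetTemplate Γ) ∧ l.sum = G ∧
        l.Chain' (fun Γ Γ' => legR Γ ≤ legL Γ') :=
  longEdgeGraph_unique_decomposition_general G hG
end

section
/- For every positive integer d, the combinatorial Severi degree with one node satisfies N^{d,1} = 3(d−1)². -/
open scoped Classical

/-- A quadruple `(a, b, w, i)` in the index set `X`: `a ≤ i < b`, `w ≥ 1`,
and the edge is not short. -/
def ValidX (x : ℕ × ℕ × ℕ × ℕ) : Prop :=
  x.1 ≤ x.2.2.2 ∧ x.2.2.2 < x.2.1 ∧ 1 ≤ x.2.2.1 ∧ ¬ (x.2.1 = x.1 + 1 ∧ x.2.2.1 = 1)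

/-- A finitely supported function `D : X → ℕ` encoding a long-edge graph with
a distribution: `D (a,b,w,i)` counts the edges with endpoints `a < b`, weight `w`,
assigned to the interval `[i, i+1]`. -/
def IsEncoding (D : (ℕ × ℕ × ℕ × ℕ) →₀ ℕ) : Prop :=
  ∀ x ∈ D.support, ValidX x

/-- The cogenus `δ(D) = ∑ D(a,b,w,i) ((b−a)w − 1)`. -/
def cogD (D : (ℕ × ℕ × ℕ × ℕ) →₀ ℕ) : ℕ :=
  ∑ x ∈ D.support, D x * ((x.2.1 - x.1) * x.2.2.1 - 1)

/-- `w_j(D)`: total weight over the interval `[j, j+1]`. -/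
def wjD (D : (ℕ × ℕ × ℕ × ℕ) →₀ ℕ) (j : ℕ) : ℕ :=
  ∑ x ∈ D.support.filter (fun x => x.1 ≤ j ∧ j < x.2.1), x.2.2.1 * D x

/-- `m_j(D)`: number of edges assigned to the interval `[j, j+1]`. -/
def mjD (D : (ℕ × ℕ × ℕ × ℕ) →₀ ℕ) (j : ℕ) : ℕ :=
  ∑ x ∈ D.support.filter (fun x => x.2.2.2 = j), D x

/-- `D` is allowable for `d`. -/
def AllowD (d : ℕ) (D : (ℕ × ℕ × ℕ × ℕ) →₀ ℕ) : Prop :=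
  (∀ x ∈ D.support, x.2.1 ≤ d + 1) ∧
    (∀ x ∈ D.support, x.2.1 = d + 1 → x.2.2.1 = 1) ∧
    ∀ j : ℕ, wjD D j ≤ j

/-- The multiplicity `μ(D) = ∏ w^{2·D(a,b,w,i)}`. -/
noncomputable def muD (D : (ℕ × ℕ × ℕ × ℕ) →₀ ℕ) : ℚ :=
  ∏ x ∈ D.support, (x.2.2.1 : ℚ) ^ (2 * D x)

/-- `α(D) = ∏ (D(a,b,w,i))!`. -/
noncomputable def alphaD (D : (ℕ × ℕ × ℕ × ℕ) →₀ ℕ) : ℚ :=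
  ∏ x ∈ D.support, (Nat.factorial (D x) : ℚ)

/-- `N^d(D) = (μ(D)/α(D)) ∏_{j∈ℕ} (j − w_j(D) + m_j(D))_{m_j(D)}` if `D` is allowable
for `d`, and `0` otherwise. -/
noncomputable def Nd (d : ℕ) (D : (ℕ × ℕ × ℕ × ℕ) →₀ ℕ) : ℚ :=
  if AllowD d D then
    (muD D / alphaD D) *
      ∏ᶠ j : ℕ, (((descPochhammer ℤ (mjD D j)).eval
        ((j : ℤ) - (wjD D j : ℤ) + (mjD D j : ℤ)) : ℤ) : ℚ)
  else 0

/-- The combinatorial Severi degree `N^{d,δ}`. -/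
noncomputable def NSev (d : ℕ) (δ : ℕ) : ℚ :=
  if δ = 0 then 1
  else ∑ᶠ (D : (ℕ × ℕ × ℕ × ℕ) →₀ ℕ) (_ : IsEncoding D ∧ cogD D = δ), Nd d D

/-- The combinatorial logarithmic Severi degree
`Q^{d,δ} = ∑ (−1)^{p−1}/p · N^{d,δ_1} ⋯ N^{d,δ_p}`, summed over ordered sequences of
positive integers with `δ_1 + ⋯ + δ_p = δ`. -/
noncomputable def QSev (d : ℕ) (δ : ℕ) : ℚ :=
  ∑ᶠ (l : List ℕ) (_ : l.sum = δ ∧ ∀ i ∈ l, 0 < i),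
    (-1 : ℚ) ^ (l.length - 1) / (l.length : ℚ) * (l.map (NSev d)).prod

-- auxiliary lemmas

lemma support_single1 (x : ℕ × ℕ × ℕ × ℕ) :
    (Finsupp.single x (1:ℕ)).support = {x} :=
  Finsupp.support_single_ne_zero x one_ne_zero

lemma cogD_single (x : ℕ × ℕ × ℕ × ℕ) :
    cogD (Finsupp.single x 1) = (x.2.1 - x.1) * x.2.2.1 - 1 := by
  simp [cogD, support_single1]

lemma isEncoding_single {x : ℕ × ℕ × ℕ × ℕ} :
    IsEncoding (Finsupp.single x 1) ↔ ValidX x := by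
  simp [IsEncoding, support_single1]

lemma wjD_single (x : ℕ × ℕ × ℕ × ℕ) (j : ℕ) :
    wjD (Finsupp.single x 1) j = if x.1 ≤ j ∧ j < x.2.1 then x.2.2.1 else 0 := by
  rw [wjD, support_single1]
  by_cases h : x.1 ≤ j ∧ j < x.2.1 <;> simp [h, Finset.filter_singleton]

lemma mjD_single (x : ℕ × ℕ × ℕ × ℕ) (j : ℕ) :
    mjD (Finsupp.single x 1) j = if x.2.2.2 = j then 1 else 0 := by
  rw [mjD, support_single1]
  by_cases h : x.2.2.2 = j <;> simp [h, Finset.filter_singleton]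

lemma muD_single (x : ℕ × ℕ × ℕ × ℕ) : muD (Finsupp.single x 1) = (x.2.2.1:ℚ)^2 := by
  simp [muD, support_single1]

lemma alphaD_single (x : ℕ × ℕ × ℕ × ℕ) : alphaD (Finsupp.single x 1) = 1 := by
  simp [alphaD, support_single1, Nat.factorial]

lemma allowD_single {d : ℕ} {x : ℕ × ℕ × ℕ × ℕ} (hab : x.1 < x.2.1) :
    AllowD d (Finsupp.single x 1) ↔
      x.2.1 ≤ d + 1 ∧ (x.2.1 = d + 1 → x.2.2.1 = 1) ∧ x.2.2.1 ≤ x.1 := by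
  unfold AllowD
  simp only [support_single1, Finset.mem_singleton, forall_eq, wjD_single]
  constructor
  · rintro ⟨h1, h2, h3⟩
    refine ⟨h1, h2, ?_⟩
    have := h3 x.1
    simpa [hab] using this
  · rintro ⟨h1, h2, h3⟩
    refine ⟨h1, h2, fun j => ?_⟩
    by_cases h : x.1 ≤ j ∧ j < x.2.1
    · simpa [h] using h3.trans h.1
    · simp [h]

lemma Nd_single {d : ℕ} {x : ℕ × ℕ × ℕ × ℕ} (hi1 : x.1 ≤ x.2.2.2) (hi2 : x.2.2.2 < x.2.1)
    (hx : AllowD d (Finsupp.single x 1)) :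
    Nd d (Finsupp.single x 1) =
      (x.2.2.1:ℚ)^2 * ((x.2.2.2 : ℚ) - (x.2.2.1 : ℚ) + 1) := by
  rw [Nd, if_pos hx, muD_single, alphaD_single]
  have hprod : (∏ᶠ j : ℕ, (((descPochhammer ℤ (mjD (Finsupp.single x 1) j)).eval
        ((j : ℤ) - (wjD (Finsupp.single x 1) j : ℤ) + (mjD (Finsupp.single x 1) j : ℤ)) : ℤ) : ℚ))
      = ((x.2.2.2 : ℚ) - (x.2.2.1 : ℚ) + 1) := by
    rw [finprod_eq_single _ x.2.2.2]
    · rw [mjD_single, if_pos rfl, wjD_single, if_pos ⟨hi1, hi2⟩]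
      simp [descPochhammer_one]
    · intro j hj
      rw [mjD_single, if_neg (fun h => hj h.symm)]
      simp [descPochhammer_zero]
  rw [hprod]; ring

lemma encoding_cog_one {D : (ℕ × ℕ × ℕ × ℕ) →₀ ℕ} (h1 : IsEncoding D) (h2 : cogD D = 1) :
    ∃ x, ValidX x ∧ (x.2.1 - x.1) * x.2.2.1 = 2 ∧ D = Finsupp.single x 1 := by
  have hterm : ∀ x ∈ D.support, 1 ≤ D x * ((x.2.1 - x.1) * x.2.2.1 - 1) := by
    intro x hx
    have hv := h1 x hx
    obtain ⟨ha, hb, hw, hnot⟩ := hv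
    have hDx : 1 ≤ D x := Nat.one_le_iff_ne_zero.mpr (Finsupp.mem_support_iff.mp hx)
    have h2' : 2 ≤ (x.2.1 - x.1) * x.2.2.1 := by
      rcases Nat.lt_or_ge x.2.2.1 2 with hw2 | hw2
      · have hw1 : x.2.2.1 = 1 := by omega
        have : x.1 + 2 ≤ x.2.1 := by
          rcases Nat.lt_or_ge x.2.1 (x.1 + 2) with h | h
          · exact absurd ⟨by omega, hw1⟩ hnot
          · exact h
        calc 2 ≤ x.2.1 - x.1 := by omega
          _ = (x.2.1 - x.1) * x.2.2.1 := by rw [hw1, mul_one]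
      · have hba : 1 ≤ x.2.1 - x.1 := by omega
        calc 2 = 1 * 2 := by norm_num
          _ ≤ (x.2.1 - x.1) * x.2.2.1 := Nat.mul_le_mul hba hw2
    exact Nat.one_le_iff_ne_zero.mpr (Nat.mul_ne_zero (by omega) (by omega))
  have hcard : D.support.card ≤ 1 := by
    have : D.support.card = ∑ x ∈ D.support, 1 := by simp
    rw [← h2, cogD, this]
    exact Finset.sum_le_sum hterm
  have hne : D.support.Nonempty := by
    by_contra h
    rw [Finset.not_nonempty_iff_eq_empty] at h
    rw [cogD, h] at h2; simp at h2
  obtain ⟨x, hx⟩ := Finset.card_eq_one.mp (le_antisymm hcard (Finset.Nonempty.card_pos hne))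
  have hxmem : x ∈ D.support := by rw [hx]; exact Finset.mem_singleton_self x
  have hcog : D x * ((x.2.1 - x.1) * x.2.2.1 - 1) = 1 := by
    rw [cogD, hx, Finset.sum_singleton] at h2; exact h2
  have hD1 : D x = 1 := Nat.eq_one_of_mul_eq_one_right hcog
  have hc1 : (x.2.1 - x.1) * x.2.2.1 - 1 = 1 := Nat.eq_one_of_mul_eq_one_left hcog
  have hv := h1 x hxmem
  refine ⟨x, hv, ?_, ?_⟩
  · have := hterm x hxmem
    obtain ⟨ha, hb, hw, hnot⟩ := hv
    omega
  · obtain ⟨_, hsingle⟩ := Finsupp.support_eq_singleton.mp hx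
    rw [hsingle, hD1]

lemma final_sum (d : ℕ) (hd : 1 ≤ d) :
    (∑ a ∈ Finset.Ico 1 d, (a:ℚ)) + (∑ a ∈ Finset.Ico 1 d, ((a:ℚ)+1))
      + (∑ a ∈ Finset.Ico 2 d, 4*((a:ℚ)-1)) = 3*((d:ℚ)-1)^2 := by
  induction d, hd using Nat.le_induction with
  | base => simp
  | succ d hd ih =>
    rw [Finset.sum_Ico_succ_top hd, Finset.sum_Ico_succ_top hd]
    rcases Nat.lt_or_ge d 2 with h2 | h2
    · have hd1 : d = 1 := by omega
      subst hd1
      norm_num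
    · rw [Finset.sum_Ico_succ_top h2]
      have ih' := ih
      push_cast
      push_cast at ih'
      linear_combination ih'

/-- For every positive integer `d`, `N^{d,1} = 3(d−1)²`. -/
theorem NSev_one_node (d : ℕ) (hd : 0 < d) :
    NSev d 1 = 3 * ((d : ℚ) - 1) ^ 2 := by
  classical
  set V : Set (ℕ × ℕ × ℕ × ℕ) := {x | ValidX x ∧ (x.2.1 - x.1) * x.2.2.1 = 2} with hV
  have hstep1 : NSev d 1 = ∑ᶠ D ∈ {D : (ℕ × ℕ × ℕ × ℕ) →₀ ℕ | IsEncoding D ∧ cogD D = 1}, Nd d D := by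
    rw [NSev, if_neg one_ne_zero]; rfl
  have hset : {D : (ℕ × ℕ × ℕ × ℕ) →₀ ℕ | IsEncoding D ∧ cogD D = 1}
      = (fun x => Finsupp.single x (1:ℕ)) '' V := by
    ext D
    constructor
    · rintro ⟨h1, h2⟩
      obtain ⟨x, hx, hc, rfl⟩ := encoding_cog_one h1 h2
      exact ⟨x, ⟨hx, hc⟩, rfl⟩
    · rintro ⟨x, ⟨hx, hc⟩, rfl⟩
      refine ⟨isEncoding_single.mpr hx, ?_⟩
      rw [cogD_single, hc]
  have hinj : V.InjOn (fun x => Finsupp.single x (1:ℕ)) :=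
    (Finsupp.single_left_injective one_ne_zero).injOn
  rw [hstep1, hset, finsum_mem_image hinj]
  set h : ℕ × ℕ × ℕ × ℕ → ℚ := fun x => Nd d (Finsupp.single x 1) with hh
  set T1 : Finset (ℕ × ℕ × ℕ × ℕ) := (Finset.Ico 1 d).image (fun a => (a, a+2, 1, a)) with hT1
  set T2 : Finset (ℕ × ℕ × ℕ × ℕ) := (Finset.Ico 1 d).image (fun a => (a, a+2, 1, a+1)) with hT2
  set T3 : Finset (ℕ × ℕ × ℕ × ℕ) := (Finset.Ico 2 d).image (fun a => (a, a+1, 2, a)) with hT3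
  have hTV : ∀ x ∈ (T1 ∪ T2 ∪ T3 : Finset (ℕ × ℕ × ℕ × ℕ)), x ∈ V := by
    intro x hx
    simp only [hT1, hT2, hT3, Finset.mem_union, Finset.mem_image, Finset.mem_Ico] at hx
    rcases hx with (⟨a, ⟨ha1, ha2⟩, rfl⟩ | ⟨a, ⟨ha1, ha2⟩, rfl⟩) | ⟨a, ⟨ha1, ha2⟩, rfl⟩
    · exact ⟨⟨show a ≤ a by omega, show a < a + 2 by omega, show 1 ≤ 1 by omega,
        show ¬(a + 2 = a + 1 ∧ 1 = 1) by omega⟩, show (a + 2 - a) * 1 = 2 by omega⟩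
    · exact ⟨⟨show a ≤ a + 1 by omega, show a + 1 < a + 2 by omega, show 1 ≤ 1 by omega,
        show ¬(a + 2 = a + 1 ∧ 1 = 1) by omega⟩, show (a + 2 - a) * 1 = 2 by omega⟩
    · exact ⟨⟨show a ≤ a by omega, show a < a + 1 by omega, show 1 ≤ 2 by omega,
        show ¬(a + 1 = a + 1 ∧ 2 = 1) by omega⟩, show (a + 1 - a) * 2 = 2 by omega⟩
  have hsupp : V ∩ Function.support h = ↑(T1 ∪ T2 ∪ T3) ∩ Function.support h := by
    ext x
    simp only [Set.mem_inter_iff, Function.mem_support, Finset.mem_coe]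
    constructor
    · rintro ⟨⟨hvx, hc⟩, hne⟩
      refine ⟨?_, hne⟩
      have hallow : AllowD d (Finsupp.single x 1) := by
        by_contra hA
        exact hne (by rw [hh]; exact if_neg hA)
      obtain ⟨a, b, w, i⟩ := x
      obtain ⟨ha, hb, hw, hnot⟩ := hvx
      have ha' : a ≤ i := ha
      have hb' : i < b := hb
      have hw' : 1 ≤ w := hw
      have hnot' : ¬(b = a + 1 ∧ w = 1) := hnot
      have hc' : (b - a) * w = 2 := hc
      have hab : a < b := lt_of_le_of_lt ha' hb'
      rw [allowD_single hab] at hallow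
      obtain ⟨hb1, hb2, hw2⟩ := hallow
      have hb1' : b ≤ d + 1 := hb1
      have hb2' : b = d + 1 → w = 1 := hb2
      have hw2' : w ≤ a := hw2
      have he2 : b - a ≤ 2 := by
        have : b - a ≤ (b - a) * w := Nat.le_mul_of_pos_right _ (by omega)
        omega
      have hcase : (b = a + 1 ∧ w = 2) ∨ (b = a + 2 ∧ w = 1) := by
        rcases (by omega : b - a = 1 ∨ b - a = 2) with h' | h' <;> rw [h'] at hc' <;> omega
      simp only [hT1, hT2, hT3, Finset.mem_union, Finset.mem_image, Finset.mem_Ico]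
      rcases hcase with ⟨hbb, hww⟩ | ⟨hbb, hww⟩
      · have hi : i = a := by omega
        have hbd : b ≠ d + 1 := by
          intro hcontra
          have h21 : w = 1 := hb2' hcontra
          omega
        exact Or.inr ⟨a, ⟨by omega, by omega⟩, by simp; omega⟩
      · have hia : i = a ∨ i = a + 1 := by omega
        rcases hia with hi | hi
        · exact Or.inl (Or.inl ⟨a, ⟨by omega, by omega⟩, by simp; omega⟩)
        · exact Or.inl (Or.inr ⟨a, ⟨by omega, by omega⟩, by simp; omega⟩)
    · rintro ⟨hx, hne⟩
      exact ⟨hTV x hx, hne⟩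
  rw [finsum_mem_eq_sum_of_inter_support_eq h hsupp]
  have hd12 : Disjoint T1 T2 := by
    rw [Finset.disjoint_left]
    intro x hx1 hx2
    simp only [hT1, hT2, Finset.mem_image, Finset.mem_Ico] at hx1 hx2
    obtain ⟨a, _, rfl⟩ := hx1
    obtain ⟨a2, _, heq⟩ := hx2
    simp only [Prod.mk.injEq] at heq
    omega
  have hd123 : Disjoint (T1 ∪ T2) T3 := by
    rw [Finset.disjoint_left]
    intro x hx1 hx2
    simp only [hT1, hT2, hT3, Finset.mem_union, Finset.mem_image, Finset.mem_Ico] at hx1 hx2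
    obtain ⟨a2, _, heq⟩ := hx2
    rcases hx1 with ⟨a, _, rfl⟩ | ⟨a, _, rfl⟩ <;>
      simp only [Prod.mk.injEq] at heq <;> omega
  rw [Finset.sum_union hd123, Finset.sum_union hd12]
  have hs1 : ∑ x ∈ T1, h x = ∑ a ∈ Finset.Ico 1 d, (a:ℚ) := by
    rw [hT1, Finset.sum_image (by intro x _ y _ hxy; simpa [Prod.mk.injEq] using hxy)]
    refine Finset.sum_congr rfl fun a ha => ?_
    rw [Finset.mem_Ico] at ha
    have hallow : AllowD d (Finsupp.single (a, a+2, 1, a) 1) := by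
      rw [allowD_single (show a < a + 2 by omega)]
      exact ⟨show a + 2 ≤ d + 1 by omega, fun _ => rfl, show 1 ≤ a by omega⟩
    show Nd d (Finsupp.single (a, a+2, 1, a) 1) = (a:ℚ)
    rw [Nd_single (show a ≤ a by omega) (show a < a + 2 by omega) hallow]
    push_cast
    ring
  have hs2 : ∑ x ∈ T2, h x = ∑ a ∈ Finset.Ico 1 d, ((a:ℚ)+1) := by
    rw [hT2, Finset.sum_image (by intro x _ y _ hxy; simpa [Prod.mk.injEq] using hxy)]
    refine Finset.sum_congr rfl fun a ha => ?_
    rw [Finset.mem_Ico] at ha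
    have hallow : AllowD d (Finsupp.single (a, a+2, 1, a+1) 1) := by
      rw [allowD_single (show a < a + 2 by omega)]
      exact ⟨show a + 2 ≤ d + 1 by omega, fun _ => rfl, show 1 ≤ a by omega⟩
    show Nd d (Finsupp.single (a, a+2, 1, a+1) 1) = (a:ℚ) + 1
    rw [Nd_single (show a ≤ a + 1 by omega) (show a + 1 < a + 2 by omega) hallow]
    push_cast
    ring
  have hs3 : ∑ x ∈ T3, h x = ∑ a ∈ Finset.Ico 2 d, 4*((a:ℚ)-1) := by
    rw [hT3, Finset.sum_image (by intro x _ y _ hxy; simpa [Prod.mk.injEq] using hxy)]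
    refine Finset.sum_congr rfl fun a ha => ?_
    rw [Finset.mem_Ico] at ha
    have hallow : AllowD d (Finsupp.single (a, a+1, 2, a) 1) := by
      rw [allowD_single (show a < a + 1 by omega)]
      refine ⟨show a + 1 ≤ d + 1 by omega, fun hcon => ?_, show 2 ≤ a by omega⟩
      exfalso
      have : a + 1 = d + 1 := hcon
      omega
    show Nd d (Finsupp.single (a, a+1, 2, a) 1) = 4 * ((a:ℚ) - 1)
    rw [Nd_single (show a ≤ a by omega) (show a < a + 1 by omega) hallow]
    push_cast
    ring
  rw [hs1, hs2, hs3]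
  exact final_sum d hd
end

section
/- For every positive integer d and every positive integer δ, the combinatorial logarithmic Severi degree refines over long-edge graphs with distributions: Q^{d,δ} = ∑_{D : δ(D) = δ} Q^d(D), where the sum is over all encodings D with cogenus δ and has only finitely many nonzero terms. -/
open scoped Classical

/-- The canonical realization of the encoding `D`: a finite index set of labeled
edges, each `x ∈ X` appearing exactly `D x` times (labeled by `0, …, D x − 1`). -/
noncomputable def TofD (D : (ℕ × ℕ × ℕ × ℕ) →₀ ℕ) : Finset ((ℕ × ℕ × ℕ × ℕ) × ℕ) :=
  D.support.biUnion (fun x => (Finset.range (D x)).image (fun n => (x, n)))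

/-- `w_j(E)` for a set `E` of labeled edges. -/
def wjE (E : Finset ((ℕ × ℕ × ℕ × ℕ) × ℕ)) (j : ℕ) : ℕ :=
  ∑ t ∈ E.filter (fun t => t.1.1 ≤ j ∧ j < t.1.2.1), t.1.2.2.1

/-- `m_j(E)` for a set `E` of labeled edges. -/
def mjE (E : Finset ((ℕ × ℕ × ℕ × ℕ) × ℕ)) (j : ℕ) : ℕ :=
  (E.filter (fun t => t.1.2.2.2 = j)).card

/-- A set `E` of labeled edges is allowable for `d`. -/
def AllowE (d : ℕ) (E : Finset ((ℕ × ℕ × ℕ × ℕ) × ℕ)) : Prop :=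
  (∀ t ∈ E, t.1.2.1 ≤ d + 1) ∧ (∀ t ∈ E, t.1.2.1 = d + 1 → t.1.2.2.1 = 1) ∧
    ∀ j : ℕ, wjE E j ≤ j

/-- `N_*^d(E) = ∏_{j∈ℕ} (j − w_j(E) + m_j(E))_{m_j(E)}` if `E` is allowable for `d`,
and `0` otherwise. -/
noncomputable def NstarE (d : ℕ) (E : Finset ((ℕ × ℕ × ℕ × ℕ) × ℕ)) : ℤ :=
  if AllowE d E then
    ∏ᶠ j : ℕ, (descPochhammer ℤ (mjE E j)).eval
      ((j : ℤ) - (wjE E j : ℤ) + (mjE E j : ℤ))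
  else 0

/-- `P` is a partition of the finite set `T` into nonempty blocks. -/
def IsPartitionOf (T : Finset ((ℕ × ℕ × ℕ × ℕ) × ℕ))
    (P : Finset (Finset ((ℕ × ℕ × ℕ × ℕ) × ℕ))) : Prop :=
  (∀ E ∈ P, E.Nonempty ∧ E ⊆ T) ∧ ∀ x ∈ T, ∃! E, E ∈ P ∧ x ∈ E

/-- `Q_*^d(D) = ∑_P (−1)^{|P|−1}(|P|−1)! ∏_{E∈P} N_*^d(E)`, summed over partitions of
the canonical realization of `D` into nonempty blocks. -/
noncomputable def QstarD (d : ℕ) (D : (ℕ × ℕ × ℕ × ℕ) →₀ ℕ) : ℤ :=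
  ∑ᶠ (P : Finset (Finset ((ℕ × ℕ × ℕ × ℕ) × ℕ))) (_ : IsPartitionOf (TofD D) P),
    (-1 : ℤ) ^ (P.card - 1) * (Nat.factorial (P.card - 1) : ℤ) * ∏ E ∈ P, NstarE d E

/-- `Q^d(D) = (μ(D)/α(D)) · Q_*^d(D)`. -/
noncomputable def Qd (d : ℕ) (D : (ℕ × ℕ × ℕ × ℕ) →₀ ℕ) : ℚ :=
  (muD D / alphaD D) * (QstarD d D : ℚ)

/-!
Expanding every `N^{d,δᵢ}` in `Q^{d,δ}` gives a sum over tuples `(D₁, …, D_p)` of nonzero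
encodings with `∑ δ(Dᵢ) = δ`; since the cogenus is additive we may group the tuples by
`D = D₁ + ⋯ + D_p`, an encoding of cogenus `δ`. For fixed `D`, `μ` is multiplicative and
`α(D) / ∏ α(Dᵢ)` is the number of ordered partitions of the labelled edge set `T(D)` into blocks
with encodings `Dᵢ` (a multinomial count), so `∑_{D₁+⋯+D_p = D} ∏ N^d(Dᵢ)` is `μ(D)/α(D)` times
the sum of `∏ N_*^d(Eᵢ)` over ordered partitions of `T(D)` into `p` nonempty blocks. That is `p!`
times the sum over unordered partitions, and `(-1)^{p-1}/p · p! = (-1)^{p-1}(p-1)!` turns the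
whole into `μ(D)/α(D) · Q_*^d(D)`. All sums are finite because only encodings supported in a box
depending on `d` contribute.
-/

open Finset Function
open scoped Nat

section LabelledSets

variable {α β : Type*}

noncomputable def encodingOf (E : Finset (α × β)) : α →₀ ℕ :=
  ∑ t ∈ E, Finsupp.single t.1 1

@[simp]
lemma encodingOf_empty : encodingOf (∅ : Finset (α × β)) = 0 := by
  simp [encodingOf]

lemma encodingOf_apply [DecidableEq α] (E : Finset (α × β)) (x : α) :
    encodingOf E x = #{t ∈ E | t.1 = x} := by
  rw [card_filter, encodingOf, Finsupp.finsetSum_apply]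
  simp [Finsupp.single_apply]

lemma encodingOf_union [DecidableEq α] [DecidableEq β] {E F : Finset (α × β)}
    (h : Disjoint E F) :
    encodingOf (E ∪ F) = encodingOf E + encodingOf F :=
  sum_union h

lemma encodingOf_insert [DecidableEq α] [DecidableEq β] {a : α × β} {E : Finset (α × β)}
    (ha : a ∉ E) :
    encodingOf (insert a E) = encodingOf E + Finsupp.single a.1 1 := by
  rw [encodingOf, sum_insert ha, add_comm, encodingOf]

lemma encodingOf_sdiff_add [DecidableEq α] [DecidableEq β] {E T : Finset (α × β)} (h : E ⊆ T) :
    encodingOf E + encodingOf (T \ E) = encodingOf T := by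
  rw [← encodingOf_union disjoint_sdiff, union_sdiff_of_subset h]

lemma encodingOf_mono {E F : Finset (α × β)} (h : E ⊆ F) : encodingOf E ≤ encodingOf F :=
  fun x => by
    classical
    simpa only [encodingOf_apply] using card_le_card (filter_subset_filter _ h)

lemma mem_support_encodingOf {E : Finset (α × β)} {x : α} :
    x ∈ (encodingOf E).support ↔ ∃ t ∈ E, t.1 = x := by
  classical
  rw [Finsupp.mem_support_iff, encodingOf_apply, ← pos_iff_ne_zero, card_pos,
    filter_nonempty_iff]

lemma encodingOf_eq_zero {E : Finset (α × β)} : encodingOf E = 0 ↔ E = ∅ := by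
  refine ⟨fun h => eq_empty_of_forall_notMem fun t ht => ?_, fun h => h ▸ encodingOf_empty⟩
  simpa [h] using mem_support_encodingOf.2 ⟨t, ht, rfl⟩

lemma sum_comp_fst_eq_sum_encodingOf {M : Type*} [AddCommMonoid M] (E : Finset (α × β))
    (g : α → M) : ∑ t ∈ E, g t.1 = (encodingOf E).sum fun x n => n • g x := by
  rw [encodingOf, ← Finsupp.sum_finsetSum_index (h := fun x n => n • g x)
    (fun _ => zero_smul ..) (fun _ _ _ => add_smul ..)]
  simp

lemma forall_mem_support_encodingOf {E : Finset (α × β)} {P : α → Prop} :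
    (∀ x ∈ (encodingOf E).support, P x) ↔ ∀ t ∈ E, P t.1 := by
  simp only [mem_support_encodingOf]
  exact ⟨fun h t ht => h _ ⟨t, ht, rfl⟩, fun h x ⟨t, ht, hx⟩ => hx ▸ h t ht⟩

lemma card_eq_sum_encodingOf (E : Finset (α × β)) :
    #E = (encodingOf E).sum fun _ n => n := by
  have h := sum_comp_fst_eq_sum_encodingOf E fun _ => (1 : ℕ)
  simp only [smul_eq_mul, mul_one] at h
  rw [card_eq_sum_ones, h]

lemma exists_eq_add_single {N : α →₀ ℕ} {y : α} (h : N y ≠ 0) :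
    ∃ M, N = M + Finsupp.single y 1 :=
  ⟨N - Finsupp.single y 1, (tsub_add_cancel_of_le (Finsupp.single_le_iff.2 (by omega))).symm⟩

noncomputable def factorialProd (N : α →₀ ℕ) : ℕ := N.prod fun _ n => n !

lemma factorialProd_pos (N : α →₀ ℕ) : 0 < factorialProd N :=
  prod_pos fun _ _ => Nat.factorial_pos _

@[simp]
lemma factorialProd_zero : factorialProd (0 : α →₀ ℕ) = 1 := by
  simp [factorialProd]

lemma factorialProd_add_single (N : α →₀ ℕ) (y : α) :
    factorialProd (N + Finsupp.single y 1) = (N y + 1) * factorialProd N := by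
  classical
  have hs : ∀ M : α →₀ ℕ, M.support ⊆ insert y (N + Finsupp.single y 1).support →
      factorialProd M = ∏ x ∈ insert y (N + Finsupp.single y 1).support, (M x)! :=
    fun M hM => Finsupp.prod_of_support_subset M hM _ fun _ _ => rfl
  rw [hs _ (subset_insert _ _), hs N fun x hx => mem_insert_of_mem (by simp_all)]
  simp_rw [Finsupp.add_apply, Finsupp.single_apply]
  rw [← mul_prod_erase _ _ (mem_insert_self _ _), ← mul_prod_erase _ (fun x => (N x)!)
    (mem_insert_self _ _), if_pos rfl, Nat.factorial_succ, mul_assoc]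
  congr 2
  exact prod_congr rfl fun x hx => by rw [if_neg (Ne.symm (ne_of_mem_erase hx)), add_zero]

end LabelledSets

section OrderedPartitions

variable {γ : Type*} [DecidableEq γ]

/-- Ordered partitions of `T` into `p` blocks, some of which may be empty. -/
noncomputable def orderedPartitions (p : ℕ) (T : Finset γ) : Finset (Fin p → Finset γ) :=
  {E ∈ Fintype.piFinset fun _ => T.powerset | univ.biUnion E = T ∧ Pairwise (Disjoint on E)}

lemma mem_orderedPartitions {p : ℕ} {T : Finset γ} {E : Fin p → Finset γ} :
    E ∈ orderedPartitions p T ↔ univ.biUnion E = T ∧ Pairwise (Disjoint on E) := by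
  rw [orderedPartitions, mem_filter, Fintype.mem_piFinset, and_iff_right_iff_imp]
  rintro ⟨rfl, -⟩ k
  exact mem_powerset.2 (subset_biUnion_of_mem E (mem_univ k))

lemma cons_mem_orderedPartitions {p : ℕ} {T E₀ : Finset γ} {F : Fin p → Finset γ} :
    Fin.cons E₀ F ∈ orderedPartitions (p + 1) T ↔
      E₀ ⊆ T ∧ F ∈ orderedPartitions p (T \ E₀) := by
  have hU : univ.biUnion (Fin.cons E₀ F) = E₀ ∪ univ.biUnion F := by
    ext; simp [Fin.exists_fin_succ]
  have hD : (∀ k, Disjoint E₀ (F k)) ↔ Disjoint E₀ (univ.biUnion F) := by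
    simp [disjoint_biUnion_right]
  simp only [mem_orderedPartitions, pairwise_fin_succ_iff_of_isSymm, onFun, Fin.cons_zero,
    Fin.cons_succ, hU, hD]
  constructor
  · rintro ⟨rfl, hdisj, hF⟩
    refine ⟨subset_union_left, ?_, hF⟩
    rw [union_sdiff_left, sdiff_eq_self_of_disjoint hdisj.symm]
  · rintro ⟨hE₀, hUF, hF⟩
    exact ⟨by rw [hUF, union_sdiff_of_subset hE₀], hUF ▸ disjoint_sdiff, hF⟩

end OrderedPartitions

section Multinomial

variable {α β : Type*} [DecidableEq α] [DecidableEq β]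

/-- Induction on `T`: for a new label `a`, the subsets avoiding `a` contribute
`D' a.1 * factorialProd (encodingOf T)`, those containing it `D a.1 * factorialProd (encodingOf T)`,
and `D a.1 + D' a.1` is the new multiplicity of `a.1`. -/
theorem card_filter_powerset_encodingOf_mul {T : Finset (α × β)} {D D' : α →₀ ℕ}
    (h : D + D' = encodingOf T) :
    #{E ∈ T.powerset | encodingOf E = D} * (factorialProd D * factorialProd D') =
      factorialProd (encodingOf T) := by
  induction T using Finset.induction_on generalizing D D' with
  | empty =>
    obtain ⟨rfl, rfl⟩ := add_eq_zero.1 (h.trans encodingOf_empty)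
    simp [filter_singleton]
  | insert a T ha ih =>
    rw [encodingOf_insert ha] at h ⊢
    have hy : D a.1 + D' a.1 = encodingOf T a.1 + 1 := by
      simpa using DFunLike.congr_fun h a.1
    have hsplit : #{E ∈ (insert a T).powerset | encodingOf E = D} =
        #{E ∈ T.powerset | encodingOf E = D} +
          #{E ∈ T.powerset | encodingOf E + Finsupp.single a.1 1 = D} := by
      simp only [card_filter, sum_powerset_insert ha]
      congr 1
      refine sum_congr rfl fun E hE => ?_
      rw [encodingOf_insert fun h' => ha (mem_powerset.1 hE h')]
    have havoid : #{E ∈ T.powerset | encodingOf E = D} * (factorialProd D * factorialProd D') =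
        D' a.1 * factorialProd (encodingOf T) := by
      by_cases h0 : D' a.1 = 0
      · rw [h0, zero_mul, card_eq_zero.2, zero_mul]
        refine filter_eq_empty_iff.2 fun E hE hED => ?_
        have := hED ▸ encodingOf_mono (mem_powerset.1 hE) a.1
        omega
      obtain ⟨D'', rfl⟩ := exists_eq_add_single h0
      rw [factorialProd_add_single,
        ← ih (D := D) (D' := D'') (add_right_cancel (by rwa [add_assoc]))]
      simp only [Finsupp.add_apply, Finsupp.single_eq_same]
      ring
    have hcontain : #{E ∈ T.powerset | encodingOf E + Finsupp.single a.1 1 = D} *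
        (factorialProd D * factorialProd D') = D a.1 * factorialProd (encodingOf T) := by
      by_cases h0 : D a.1 = 0
      · rw [h0, zero_mul, card_eq_zero.2, zero_mul]
        refine filter_eq_empty_iff.2 fun E _ hED => ?_
        simp [← hED] at h0
      obtain ⟨D₀, rfl⟩ := exists_eq_add_single h0
      simp only [add_left_inj]
      rw [factorialProd_add_single, ← ih (D := D₀) (D' := D') (add_right_cancel (by
        rwa [add_right_comm]))]
      simp only [Finsupp.add_apply, Finsupp.single_eq_same]
      ring
    rw [hsplit, add_mul, havoid, hcontain, factorialProd_add_single, ← add_mul, add_comm, hy]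

theorem card_filter_orderedPartitions_mul {p : ℕ} {T : Finset (α × β)}
    {t : Fin p → α →₀ ℕ} (ht : ∑ k, t k = encodingOf T) :
    #{E ∈ orderedPartitions p T | ∀ k, encodingOf (E k) = t k} * ∏ k, factorialProd (t k) =
      factorialProd (encodingOf T) := by
  induction p generalizing T with
  | zero =>
    obtain rfl : T = ∅ := encodingOf_eq_zero.1 (by simpa using ht.symm)
    have : orderedPartitions 0 (∅ : Finset (α × β)) = univ :=
      eq_univ_of_forall fun E => mem_orderedPartitions.2 ⟨by simp, fun i => i.elim0⟩
    simp [this]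
  | succ p ih =>
    have hcard : #{E ∈ orderedPartitions (p + 1) T | ∀ k, encodingOf (E k) = t k} =
        ∑ E₀ ∈ {E₀ ∈ T.powerset | encodingOf E₀ = t 0},
          #{F ∈ orderedPartitions p (T \ E₀) | ∀ k, encodingOf (F k) = t k.succ} := by
      rw [← card_sigma]
      refine card_nbij' (fun E => ⟨E 0, Fin.tail E⟩) (fun q => Fin.cons q.1 q.2) ?_ ?_ ?_ ?_
      · intro E hE
        simp only [mem_coe, mem_sigma, mem_filter, mem_powerset] at hE ⊢
        rw [← Fin.cons_self_tail E, cons_mem_orderedPartitions] at hE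
        exact ⟨⟨hE.1.1, hE.2 0⟩, hE.1.2, fun k => hE.2 k.succ⟩
      · rintro ⟨E₀, F⟩ hq
        simp only [mem_coe, mem_sigma, mem_filter, mem_powerset] at hq ⊢
        exact ⟨cons_mem_orderedPartitions.2 ⟨hq.1.1, hq.2.1⟩, Fin.cases hq.1.2 hq.2.2⟩
      · exact fun E _ => Fin.cons_self_tail E
      · exact fun q _ => rfl
    rw [hcard, sum_mul, Fin.prod_univ_succ]
    have hrest : ∀ E₀ ∈ {E₀ ∈ T.powerset | encodingOf E₀ = t 0},
        #{F ∈ orderedPartitions p (T \ E₀) | ∀ k, encodingOf (F k) = t k.succ} *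
          (factorialProd (t 0) * ∏ k : Fin p, factorialProd (t k.succ)) =
        factorialProd (t 0) * factorialProd (∑ k : Fin p, t k.succ) := by
      intro E₀ hE₀
      rw [mem_filter, mem_powerset] at hE₀
      have hsum : ∑ k : Fin p, t k.succ = encodingOf (T \ E₀) := by
        refine add_left_cancel (a := t 0) ?_
        rw [← Fin.sum_univ_succ, ht, ← hE₀.2, encodingOf_sdiff_add hE₀.1]
      rw [mul_left_comm, ih hsum, hsum]
    rw [sum_congr rfl hrest, sum_const, smul_eq_mul,
      card_filter_powerset_encodingOf_mul (by rwa [← Fin.sum_univ_succ])]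

lemma sum_encodingOf_eq_of_mem_orderedPartitions {p : ℕ} {T : Finset (α × β)}
    {E : Fin p → Finset (α × β)} (hE : E ∈ orderedPartitions p T) :
    ∑ k, encodingOf (E k) = encodingOf T := by
  obtain ⟨rfl, hdisj⟩ := mem_orderedPartitions.1 hE
  rw [encodingOf, sum_biUnion fun j _ k _ hjk => hdisj hjk]
  rfl

theorem sum_orderedPartitions_eq_sum_finAntidiagonal {K : Type*} [Field K] [CharZero K]
    {p : ℕ} (T : Finset (α × β)) (G : (Fin p → α →₀ ℕ) → K) :
    ∑ E ∈ orderedPartitions p T, G (fun k => encodingOf (E k)) =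
      ∑ t ∈ finAntidiagonal p (encodingOf T),
        (factorialProd (encodingOf T) / ∏ k, factorialProd (t k) : K) * G t := by
  rw [← sum_fiberwise_of_maps_to (g := fun E k => encodingOf (E k)) fun E hE =>
    mem_finAntidiagonal.2 (sum_encodingOf_eq_of_mem_orderedPartitions hE)]
  refine sum_congr rfl fun t ht => ?_
  have hcount := card_filter_orderedPartitions_mul (mem_finAntidiagonal.1 ht)
  simp only [← funext_iff] at hcount
  rw [sum_congr rfl fun E hE => congrArg G (mem_filter.1 hE).2, sum_const, nsmul_eq_mul,
    ← hcount, Nat.cast_mul, Nat.cast_prod, mul_div_cancel_right₀ _ (prod_ne_zero_iff.2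
      fun k _ => Nat.cast_ne_zero.2 (factorialProd_pos (t k)).ne')]

end Multinomial

lemma card_filter_piFinset_injective {σ : Type*} (s : Finset σ) (p : ℕ)
    [DecidablePred (Injective : (Fin p → σ) → Prop)] :
    #{E ∈ Fintype.piFinset fun _ : Fin p => s | Injective E} = (#s).descFactorial p := by
  have h := Fintype.card_embedding_eq (α := Fin p) (β := s)
  rw [Fintype.card_fin, Fintype.card_coe] at h
  rw [← h, ← Fintype.card_coe]
  refine Fintype.card_congr
    { toFun := fun E => ⟨fun k => ⟨E.1 k, ?_⟩,
        fun j k h => (mem_filter.1 E.2).2 (congrArg Subtype.val h)⟩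
      invFun := fun f => ⟨fun k => f k, mem_filter.2 ⟨Fintype.mem_piFinset.2 fun k => (f k).2,
        fun j k h => f.injective (Subtype.ext h)⟩⟩
      left_inv := fun E => rfl
      right_inv := fun f => rfl }
  exact Fintype.mem_piFinset.1 (mem_filter.1 E.2).1 k

abbrev Edge := ℕ × ℕ × ℕ × ℕ

noncomputable def partitionsOf (T : Finset (Edge × ℕ)) :
    Finset (Finset (Finset (Edge × ℕ))) :=
  {P ∈ T.powerset.powerset | IsPartitionOf T P}

section Partitions

variable {T : Finset (Edge × ℕ)} {P : Finset (Finset (Edge × ℕ))}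

lemma mem_partitionsOf : P ∈ partitionsOf T ↔ IsPartitionOf T P := by
  rw [partitionsOf, mem_filter, mem_powerset, and_iff_right_iff_imp]
  exact fun h B hB => mem_powerset.2 (h.1 B hB).2

lemma IsPartitionOf.pairwiseDisjoint (h : IsPartitionOf T P) :
    (P : Set (Finset (Edge × ℕ))).PairwiseDisjoint id :=
  fun B hB _ hB' hne => disjoint_left.2 fun x hx hx' => hne <|
    (h.2 x ((h.1 B hB).2 hx)).unique ⟨hB, hx⟩ ⟨hB', hx'⟩

lemma IsPartitionOf.biUnion_eq (h : IsPartitionOf T P) : P.biUnion id = T := by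
  ext x
  simp only [mem_biUnion, id]
  exact ⟨fun ⟨B, hB, hx⟩ => (h.1 B hB).2 hx, fun hx => (h.2 x hx).exists⟩

lemma isPartitionOf_image {p : ℕ} {E : Fin p → Finset (Edge × ℕ)}
    (hE : E ∈ orderedPartitions p T) (hne : ∀ k, (E k).Nonempty) :
    IsPartitionOf T (univ.image E) := by
  obtain ⟨rfl, hdisj⟩ := mem_orderedPartitions.1 hE
  refine ⟨fun B hB => ?_, fun x hx => ?_⟩
  · obtain ⟨k, -, rfl⟩ := mem_image.1 hB
    exact ⟨hne k, subset_biUnion_of_mem E (mem_univ k)⟩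
  · obtain ⟨k, -, hk⟩ := mem_biUnion.1 hx
    refine ⟨E k, ⟨mem_image_of_mem E (mem_univ k), hk⟩, ?_⟩
    rintro B ⟨hB, hxB⟩
    obtain ⟨j, -, rfl⟩ := mem_image.1 hB
    by_contra hjk
    exact disjoint_left.1 (hdisj fun h => hjk (congrArg E h)) hxB hk

lemma injective_of_mem_orderedPartitions {p : ℕ} {E : Fin p → Finset (Edge × ℕ)}
    (hE : E ∈ orderedPartitions p T) (hne : ∀ k, (E k).Nonempty) : Injective E := by
  intro j k hjk
  by_contra h
  have := (mem_orderedPartitions.1 hE).2 h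
  rw [onFun, hjk, disjoint_self, bot_eq_empty] at this
  exact (hne k).ne_empty this

lemma filter_orderedPartitions_image_eq (hP : IsPartitionOf T P) {p : ℕ} (hp : #P = p) :
    {E ∈ orderedPartitions p T | (∀ k, (E k).Nonempty) ∧ univ.image E = P} =
      {E ∈ Fintype.piFinset fun _ : Fin p => P | Injective E} := by
  ext E
  simp only [mem_filter, Fintype.mem_piFinset]
  constructor
  · rintro ⟨hE, hne, rfl⟩
    exact ⟨fun k => mem_image_of_mem E (mem_univ k), injective_of_mem_orderedPartitions hE hne⟩
  · rintro ⟨hEP, hinj⟩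
    have himage : univ.image E = P := eq_of_subset_of_card_le
      (fun B hB => by obtain ⟨k, -, rfl⟩ := mem_image.1 hB; exact hEP k)
      (by rw [card_image_of_injective _ hinj, card_univ, Fintype.card_fin, hp])
    refine ⟨mem_orderedPartitions.2 ⟨?_, fun j k hjk => ?_⟩, fun k => (hP.1 _ (hEP k)).1,
      himage⟩
    · rw [← hP.biUnion_eq, ← himage, image_biUnion]
      rfl
    · exact hP.pairwiseDisjoint (hEP j) (hEP k) (hinj.ne hjk)

theorem sum_orderedPartitions_nonempty_eq {R : Type*} [CommSemiring R]
    (H : Finset (Edge × ℕ) → R) (p : ℕ) (T : Finset (Edge × ℕ)) :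
    ∑ E ∈ orderedPartitions p T with ∀ k, (E k).Nonempty, ∏ k, H (E k) =
      p ! • ∑ P ∈ partitionsOf T with #P = p, ∏ B ∈ P, H B := by
  rw [← sum_fiberwise_of_maps_to (g := fun E => univ.image E)
    (t := {P ∈ partitionsOf T | #P = p}), smul_sum]
  · refine sum_congr rfl fun P hP => ?_
    rw [mem_filter, mem_partitionsOf] at hP
    have hterm :
        ∀ E ∈ {E ∈ orderedPartitions p T | (∀ k, (E k).Nonempty) ∧ univ.image E = P},
          ∏ k, H (E k) = ∏ B ∈ P, H B := by
      intro E hE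
      obtain ⟨hOP, hne, rfl⟩ := mem_filter.1 hE
      rw [prod_image (injective_of_mem_orderedPartitions hOP hne).injOn]
    rw [filter_filter, sum_congr rfl hterm, sum_const,
      filter_orderedPartitions_image_eq hP.1 hP.2, card_filter_piFinset_injective P p, hP.2,
      Nat.descFactorial_self]
  · intro E hE
    rw [mem_filter] at hE ⊢
    rw [mem_partitionsOf,
      card_image_of_injective _ (injective_of_mem_orderedPartitions hE.1 hE.2), card_univ,
      Fintype.card_fin]
    exact ⟨isPartitionOf_image hE.1 hE.2, rfl⟩

end Partitions

section Encodings

variable {d : ℕ}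

lemma wjE_eq_wjD (E : Finset (Edge × ℕ)) (j : ℕ) : wjE E j = wjD (encodingOf E) j := by
  rw [wjE, wjD, sum_filter, sum_filter, sum_comp_fst_eq_sum_encodingOf E
    fun x => if x.1 ≤ j ∧ j < x.2.1 then x.2.2.1 else 0, Finsupp.sum]
  refine sum_congr rfl fun x _ => ?_
  split_ifs <;> simp [mul_comm]

lemma mjE_eq_mjD (E : Finset (Edge × ℕ)) (j : ℕ) : mjE E j = mjD (encodingOf E) j := by
  rw [mjE, mjD, card_filter, sum_filter, sum_comp_fst_eq_sum_encodingOf E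
    fun x => if x.2.2.2 = j then 1 else 0, Finsupp.sum]
  refine sum_congr rfl fun x _ => ?_
  split_ifs <;> simp

lemma allowE_iff_allowD (E : Finset (Edge × ℕ)) : AllowE d E ↔ AllowD d (encodingOf E) := by
  simp only [AllowE, AllowD, forall_mem_support_encodingOf, wjE_eq_wjD]

noncomputable def NstarD (d : ℕ) (D : Edge →₀ ℕ) : ℤ :=
  if AllowD d D then
    ∏ᶠ j : ℕ, (descPochhammer ℤ (mjD D j)).eval
      ((j : ℤ) - (wjD D j : ℤ) + (mjD D j : ℤ))
  else 0

lemma NstarE_eq_NstarD (E : Finset (Edge × ℕ)) : NstarE d E = NstarD d (encodingOf E) := by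
  simp only [NstarE, NstarD, wjE_eq_wjD, mjE_eq_mjD, allowE_iff_allowD]

lemma Nd_eq_mul_NstarD (D : Edge →₀ ℕ) : Nd d D = muD D / alphaD D * NstarD d D := by
  rw [Nd, NstarD]
  split_ifs
  · exact congrArg _ ((Int.castRingHom ℚ).toMonoidHom.map_finprod_of_injective
      Int.cast_injective _).symm
  · simp

lemma alphaD_eq_factorialProd (D : Edge →₀ ℕ) : alphaD D = factorialProd D := by
  rw [alphaD, factorialProd, Finsupp.prod, Nat.cast_prod]

lemma muD_add (D D' : Edge →₀ ℕ) : muD (D + D') = muD D * muD D' :=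
  Finsupp.prod_add_index' (h := fun (x : Edge) n => (x.2.2.1 : ℚ) ^ (2 * n)) (fun _ => by simp)
    fun _ _ _ => by rw [mul_add, pow_add]

lemma muD_sum {ι : Type*} (s : Finset ι) (t : ι → Edge →₀ ℕ) :
    muD (∑ k ∈ s, t k) = ∏ k ∈ s, muD (t k) := by
  induction s using Finset.cons_induction with
  | empty => simp [muD]
  | cons a s ha ih => rw [sum_cons, prod_cons, muD_add, ih]

lemma mem_TofD {D : Edge →₀ ℕ} {t : Edge × ℕ} : t ∈ TofD D ↔ t.2 < D t.1 := by
  simp only [TofD, mem_biUnion, mem_image, mem_range, Finsupp.mem_support_iff]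
  exact ⟨fun ⟨x, _, n, hn, h⟩ => h ▸ hn, fun h => ⟨t.1, by omega, t.2, h, rfl⟩⟩

lemma encodingOf_TofD (D : Edge →₀ ℕ) : encodingOf (TofD D) = D := by
  ext x
  have hfib :
      {t ∈ TofD D | t.1 = x} = (range (D x)).map ⟨Prod.mk x, Prod.mk_right_injective x⟩ := by
    ext ⟨y, n⟩
    simp only [mem_filter, mem_TofD, mem_map, mem_range, Embedding.coeFn_mk, Prod.mk.injEq]
    constructor
    · rintro ⟨h, rfl⟩
      exact ⟨n, h, rfl, rfl⟩
    · rintro ⟨n, h, rfl, rfl⟩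
      exact ⟨h, rfl⟩
  rw [encodingOf_apply, hfib, card_map, card_range]

end Encodings

section Cogenus

lemma one_le_cogenus_of_validX {x : Edge} (hx : ValidX x) :
    1 ≤ (x.2.1 - x.1) * x.2.2.1 - 1 := by
  obtain ⟨h1, h2, h3, h4⟩ := hx
  have : 2 ≤ (x.2.1 - x.1) * x.2.2.1 := by
    rcases Nat.lt_or_ge 1 (x.2.1 - x.1) with h | h
    · nlinarith
    · have : x.2.2.1 ≠ 1 := fun hw => h4 ⟨by omega, hw⟩
      have : x.2.1 - x.1 = 1 := by omega
      rw [this]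
      omega
  omega

lemma cogD_finsetSum {ι : Type*} (s : Finset ι) (t : ι → Edge →₀ ℕ) :
    cogD (∑ k ∈ s, t k) = ∑ k ∈ s, cogD (t k) :=
  (Finsupp.sum_finsetSum_index (h := fun (x : Edge) n => n * ((x.2.1 - x.1) * x.2.2.1 - 1))
    (fun _ => zero_mul _) fun _ _ _ => add_mul ..).symm

lemma cogD_zero : cogD 0 = 0 := by simp [cogD]

variable {D : Edge →₀ ℕ}

lemma sum_le_cogD (hD : IsEncoding D) : (D.sum fun _ n => n) ≤ cogD D :=
  sum_le_sum fun x hx => Nat.le_mul_of_pos_right _ (one_le_cogenus_of_validX (hD x hx))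

lemma apply_le_cogD (hD : IsEncoding D) (x : Edge) : D x ≤ cogD D := by
  by_cases hx : x ∈ D.support
  · exact (single_le_sum (f := fun x => D x) (fun _ _ => Nat.zero_le _) hx).trans
      (sum_le_cogD hD)
  · simp [Finsupp.notMem_support_iff.1 hx]

lemma cogD_pos (hD : IsEncoding D) (h0 : D ≠ 0) : 0 < cogD D := by
  obtain ⟨x, hx⟩ := Finsupp.support_nonempty_iff.2 h0
  exact (Nat.pos_of_ne_zero (Finsupp.mem_support_iff.1 hx)).trans_le (apply_le_cogD hD x)

lemma card_TofD_le_cogD (hD : IsEncoding D) : #(TofD D) ≤ cogD D := by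
  rw [card_eq_sum_encodingOf, encodingOf_TofD]
  exact sum_le_cogD hD

lemma IsEncoding.mono {D' : Edge →₀ ℕ} (hD : IsEncoding D) (h : D' ≤ D) : IsEncoding D' :=
  fun x hx => hD x (Finsupp.support_mono h hx)

lemma isEncoding_sum {ι : Type*} {s : Finset ι} {t : ι → Edge →₀ ℕ}
    (h : ∀ k ∈ s, IsEncoding (t k)) : IsEncoding (∑ k ∈ s, t k) := fun x hx => by
  obtain ⟨k, hk, hx⟩ := mem_biUnion.1 (Finsupp.support_finsetSum hx)
  exact h k hk x hx

end Cogenus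

section Box

def edgeBox (d : ℕ) : Finset Edge :=
  range (d + 1) ×ˢ range (d + 2) ×ˢ range (d + 1) ×ˢ range (d + 1)

variable {d : ℕ}

/-- The weight of an edge over the interval it is assigned to is bounded by `w_i ≤ i ≤ d`. -/
lemma mem_edgeBox_of_allowE {E : Finset (Edge × ℕ)} (hE : AllowE d E) {t : Edge × ℕ}
    (ht : t ∈ E) (hv : ValidX t.1) : t.1 ∈ edgeBox d := by
  obtain ⟨hb, -, hw⟩ := hE
  obtain ⟨h1, h2, -, -⟩ := hv
  have hwt : t.1.2.2.1 ≤ wjE E t.1.2.2.2 :=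
    single_le_sum (f := fun t : Edge × ℕ => t.1.2.2.1) (fun _ _ => Nat.zero_le _)
      (mem_filter.2 ⟨ht, h1, h2⟩)
  have := hb t ht
  have := hw t.1.2.2.2
  simp only [edgeBox, mem_product, mem_range]
  omega

lemma support_subset_edgeBox {D : Edge →₀ ℕ} (hD : IsEncoding D)
    (h : ∀ t ∈ TofD D, ∃ E, AllowE d E ∧ t ∈ E) : D.support ⊆ edgeBox d := by
  intro x hx
  obtain ⟨E, hE, ht⟩ :=
    h (x, 0) (mem_TofD.2 (Nat.pos_of_ne_zero (Finsupp.mem_support_iff.1 hx)))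
  exact mem_edgeBox_of_allowE hE ht (hD x hx)

noncomputable def encodings (d δ : ℕ) : Finset (Edge →₀ ℕ) :=
  {D ∈ (edgeBox d).finsupp fun _ => range (δ + 1) | IsEncoding D ∧ cogD D = δ}

lemma mem_encodings {δ : ℕ} {D : Edge →₀ ℕ} :
    D ∈ encodings d δ ↔ IsEncoding D ∧ cogD D = δ ∧ D.support ⊆ edgeBox d := by
  rw [encodings, mem_filter, mem_finsupp_iff]
  constructor
  · rintro ⟨⟨hs, -⟩, hD, hδ⟩
    exact ⟨hD, hδ, hs⟩
  · rintro ⟨hD, rfl, hs⟩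
    exact ⟨⟨hs, fun x _ => mem_range.2 (Nat.lt_succ_of_le (apply_le_cogD hD x))⟩, hD, rfl⟩

lemma finsum_eq_sum_encodings {M : Type*} [AddCommMonoid M] {f : (Edge →₀ ℕ) → M} (δ : ℕ)
    (hf : ∀ D, IsEncoding D → f D ≠ 0 → D.support ⊆ edgeBox d) :
    ∑ᶠ (D : Edge →₀ ℕ) (_ : IsEncoding D ∧ cogD D = δ), f D =
      ∑ D ∈ encodings d δ, f D := by
  rw [← finsum_mem_coe_finset]
  refine finsum_congr fun D => ?_
  rw [finsum_eq_if, finsum_eq_if]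
  by_cases h : f D = 0
  · simp [h]
  · refine if_congr ?_ rfl rfl
    rw [mem_coe, mem_encodings]
    exact ⟨fun ⟨hD, hδ⟩ => ⟨hD, hδ, hf D hD h⟩, fun ⟨hD, hδ, _⟩ => ⟨hD, hδ⟩⟩

lemma support_subset_edgeBox_of_Nd_ne_zero {D : Edge →₀ ℕ} (hD : IsEncoding D)
    (h : Nd d D ≠ 0) :
    D.support ⊆ edgeBox d := by
  have hA : AllowD d D := by
    by_contra hA
    exact h (if_neg hA)
  rw [← encodingOf_TofD D, ← allowE_iff_allowD] at hA
  exact support_subset_edgeBox hD fun t ht => ⟨TofD D, hA, ht⟩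

lemma QstarD_eq_sum (d : ℕ) (D : Edge →₀ ℕ) :
    QstarD d D = ∑ P ∈ partitionsOf (TofD D),
      (-1) ^ (#P - 1) * ((#P - 1)! : ℤ) * ∏ E ∈ P, NstarE d E := by
  rw [QstarD, ← finsum_mem_coe_finset]
  simp only [mem_coe, mem_partitionsOf]

lemma support_subset_edgeBox_of_Qd_ne_zero {D : Edge →₀ ℕ} (hD : IsEncoding D)
    (h : Qd d D ≠ 0) :
    D.support ⊆ edgeBox d := by
  have hQ : QstarD d D ≠ 0 := fun h0 => h (by simp [Qd, h0])
  rw [QstarD_eq_sum] at hQ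
  obtain ⟨P, hP, hprod⟩ := exists_ne_zero_of_sum_ne_zero hQ
  refine support_subset_edgeBox hD fun t ht => ?_
  obtain ⟨E, ⟨hEP, htE⟩, -⟩ := (mem_partitionsOf.1 hP).2 t ht
  refine ⟨E, ?_, htE⟩
  by_contra hA
  exact right_ne_zero_of_mul hprod (prod_eq_zero hEP (if_neg hA))

end Box

section Compositions

variable {μ : Type*} [AddCommMonoid μ] [HasAntidiagonal μ] [DecidableEq μ]

noncomputable def compositions (p : ℕ) (n : μ) : Finset (Fin p → μ) :=
  {t ∈ finAntidiagonal p n | ∀ k, t k ≠ 0}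

lemma mem_compositions {p : ℕ} {n : μ} {t : Fin p → μ} :
    t ∈ compositions p n ↔ ∑ k, t k = n ∧ ∀ k, t k ≠ 0 := by
  rw [compositions, mem_filter, mem_finAntidiagonal]

end Compositions

lemma finsum_lists_eq_sum_compositions {M : Type*} [AddCommMonoid M] (f : List ℕ → M) {δ : ℕ}
    (hδ : 0 < δ) :
    ∑ᶠ (l : List ℕ) (_ : l.sum = δ ∧ ∀ i ∈ l, 0 < i), f l =
      ∑ p ∈ Icc 1 δ, ∑ v ∈ compositions p δ, f (List.ofFn v) := by
  rw [sum_sigma', ← finsum_mem_coe_finset]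
  refine (finsum_mem_eq_of_bijOn (t := {l : List ℕ | l.sum = δ ∧ ∀ i ∈ l, 0 < i})
    (fun x : Σ p, Fin p → ℕ => List.ofFn x.2) ⟨?_, ?_, ?_⟩ fun _ _ => rfl).symm
  · rintro ⟨p, v⟩ hv
    rw [mem_coe, mem_sigma, mem_compositions] at hv
    refine ⟨by rw [List.sum_ofFn, hv.2.1], fun i hi => ?_⟩
    obtain ⟨k, rfl⟩ := List.mem_ofFn.1 hi
    exact Nat.pos_of_ne_zero (hv.2.2 k)
  · rintro ⟨p, v⟩ - ⟨q, w⟩ - h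
    exact List.ofFn_inj'.1 h
  · rintro l ⟨hsum, hpos⟩
    refine ⟨⟨l.length, l.get⟩, ?_, List.ofFn_get l⟩
    rw [mem_coe, mem_sigma, mem_compositions, mem_Icc, ← List.sum_ofFn, List.ofFn_get]
    have hne : l ≠ [] := by rintro rfl; simp at hsum; omega
    exact ⟨⟨List.length_pos_iff.2 hne, hsum ▸ l.length_le_sum_of_one_le hpos⟩, hsum,
      fun k => (hpos _ (List.get_mem l k)).ne'⟩

/-- The coefficient of `x ^ p` in `log (1 + x)`. -/
noncomputable def logCoeff (p : ℕ) : ℚ := (-1) ^ (p - 1) / p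

lemma logCoeff_mul_factorial {p : ℕ} (hp : 1 ≤ p) :
    logCoeff p * p ! = (-1) ^ (p - 1) * (p - 1)! := by
  obtain ⟨q, rfl⟩ := Nat.exists_eq_add_of_le' hp
  rw [logCoeff, Nat.add_sub_cancel, Nat.factorial_succ]
  push_cast
  field_simp

lemma QSev_eq_sum_compositions (d : ℕ) {δ : ℕ} (hδ : 0 < δ) :
    QSev d δ =
      ∑ p ∈ Icc 1 δ, logCoeff p * ∑ v ∈ compositions p δ, ∏ k, NSev d (v k) := by
  rw [QSev, finsum_lists_eq_sum_compositions _ hδ]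
  simp only [List.length_ofFn, List.map_ofFn, List.prod_ofFn, mul_sum, logCoeff]
  rfl

lemma NSev_eq_sum_encodings (d : ℕ) {δ : ℕ} (hδ : δ ≠ 0) :
    NSev d δ = ∑ D ∈ encodings d δ, Nd d D := by
  rw [NSev, if_neg hδ]
  exact finsum_eq_sum_encodings δ fun D hD h => support_subset_edgeBox_of_Nd_ne_zero hD h

section Regrouping

variable {d δ p : ℕ}

lemma prod_NSev_eq_sum_piFinset {v : Fin p → ℕ} (hv : ∀ k, v k ≠ 0) :
    ∏ k, NSev d (v k) =
      ∑ t ∈ Fintype.piFinset fun k => encodings d (v k), ∏ k, Nd d (t k) := by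
  rw [← prod_univ_sum]
  exact prod_congr rfl fun k _ => NSev_eq_sum_encodings d (hv k)

/-- Both sides run over the same tuples `t`, indexed by `v = cogD ∘ t` resp. `D = ∑ k, t k`. -/
lemma sum_compositions_sum_piFinset_eq {M : Type*} [AddCommMonoid M]
    (f : (Fin p → Edge →₀ ℕ) → M) :
    ∑ v ∈ compositions p δ, ∑ t ∈ Fintype.piFinset (fun k => encodings d (v k)), f t =
      ∑ D ∈ encodings d δ, ∑ t ∈ compositions p D, f t := by
  rw [sum_sigma', sum_sigma']
  refine sum_nbij' (fun x => ⟨∑ k, x.2 k, x.2⟩) (fun x => ⟨fun k => cogD (x.2 k), x.2⟩)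
    ?_ ?_ ?_ ?_ fun _ _ => rfl
  · rintro ⟨v, t⟩ h
    simp only [mem_sigma, mem_compositions, Fintype.mem_piFinset, mem_encodings] at h ⊢
    obtain ⟨⟨hv, hv0⟩, ht⟩ := h
    refine ⟨⟨isEncoding_sum fun k _ => (ht k).1, ?_, ?_⟩, trivial, fun k h0 => ?_⟩
    · rw [cogD_finsetSum, ← hv]
      exact sum_congr rfl fun k _ => (ht k).2.1
    · refine (Finsupp.support_finsetSum).trans (biUnion_subset.2 fun k _ => (ht k).2.2)
    · exact hv0 k (by rw [← (ht k).2.1, h0, cogD_zero])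
  · rintro ⟨D, t⟩ h
    simp only [mem_sigma, mem_compositions, Fintype.mem_piFinset, mem_encodings] at h ⊢
    obtain ⟨⟨hD, hδ, hbox⟩, rfl, ht0⟩ := h
    have hle : ∀ k, t k ≤ ∑ j, t j := fun k =>
      single_le_sum (f := t) (fun _ _ => zero_le) (mem_univ k)
    refine ⟨⟨by rw [← hδ, cogD_finsetSum],
      fun k => (cogD_pos (hD.mono (hle k)) (ht0 k)).ne'⟩,
      fun k => ⟨hD.mono (hle k), trivial, (Finsupp.support_mono (hle k)).trans hbox⟩⟩
  · rintro ⟨v, t⟩ h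
    simp only [mem_sigma, Fintype.mem_piFinset, mem_encodings] at h
    exact Sigma.ext (funext fun k => (h.2 k).2.1) HEq.rfl
  · rintro ⟨D, t⟩ h
    simp only [mem_sigma, mem_compositions] at h
    exact Sigma.ext h.2.1 HEq.rfl

end Regrouping

lemma sum_compositions_prod_Nd (d p : ℕ) (D : Edge →₀ ℕ) :
    ∑ t ∈ compositions p D, ∏ k, Nd d (t k) =
      muD D / alphaD D * ∑ E ∈ orderedPartitions p (TofD D) with ∀ k, (E k).Nonempty,
        ∏ k, (NstarE d (E k) : ℚ) := by
  have hG := sum_orderedPartitions_eq_sum_finAntidiagonal (K := ℚ) (TofD D)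
    fun t : Fin p → Edge →₀ ℕ =>
      if ∀ k, t k ≠ 0 then ∏ k, (NstarD d (t k) : ℚ) else 0
  simp only [encodingOf_TofD, ne_eq, encodingOf_eq_zero, ← nonempty_iff_ne_empty, mul_ite,
    mul_zero, ← sum_filter] at hG
  simp only [NstarE_eq_NstarD]
  rw [hG, mul_sum]
  refine sum_congr rfl fun t ht => ?_
  obtain ⟨hsum, -⟩ := mem_compositions.1 ht
  have hα : ∀ M : Edge →₀ ℕ, (factorialProd M : ℚ) ≠ 0 := fun M =>
    Nat.cast_ne_zero.2 (factorialProd_pos M).ne'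
  simp only [Nd_eq_mul_NstarD, prod_mul_distrib, prod_div_distrib, ← muD_sum, hsum,
    alphaD_eq_factorialProd, Nat.cast_prod]
  field_simp [hα, prod_ne_zero_iff.2 fun k _ => hα (t k)]

lemma sum_logCoeff_mul_sum_orderedPartitions (H : Finset (Edge × ℕ) → ℚ)
    {T : Finset (Edge × ℕ)} (hT : T.Nonempty) {δ : ℕ} (hTδ : #T ≤ δ) :
    ∑ p ∈ Icc 1 δ, logCoeff p * ∑ E ∈ orderedPartitions p T with ∀ k, (E k).Nonempty,
        ∏ k, H (E k) =
      ∑ P ∈ partitionsOf T, (-1) ^ (#P - 1) * ((#P - 1)! : ℚ) * ∏ B ∈ P, H B := by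
  have hcard : ∀ P ∈ partitionsOf T, #P ∈ Icc 1 δ := fun P hP => by
    have hP := mem_partitionsOf.1 hP
    obtain ⟨x, hx⟩ := hT
    obtain ⟨B, ⟨hB, -⟩, -⟩ := hP.2 x hx
    have := card_le_card_biUnion hP.pairwiseDisjoint fun B hB => (hP.1 B hB).1
    rw [hP.biUnion_eq] at this
    exact mem_Icc.2 ⟨card_pos.2 ⟨B, hB⟩, this.trans hTδ⟩
  rw [← sum_fiberwise_of_maps_to hcard]
  refine sum_congr rfl fun p hp => ?_
  rw [sum_orderedPartitions_nonempty_eq, nsmul_eq_mul, ← mul_assoc,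
    logCoeff_mul_factorial (mem_Icc.1 hp).1, mul_sum]
  exact sum_congr rfl fun P hP => by rw [(mem_filter.1 hP).2]

theorem QSev_eq_sum_Qd_general (d δ : ℕ) (hδ : 0 < δ) :
    QSev d δ = ∑ᶠ (D : (ℕ × ℕ × ℕ × ℕ) →₀ ℕ) (_ : IsEncoding D ∧ cogD D = δ), Qd d D := by
  rw [QSev_eq_sum_compositions d hδ,
    finsum_eq_sum_encodings δ fun D hD h => support_subset_edgeBox_of_Qd_ne_zero hD h]
  calc ∑ p ∈ Icc 1 δ, logCoeff p * ∑ v ∈ compositions p δ, ∏ k, NSev d (v k)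
      = ∑ p ∈ Icc 1 δ, ∑ D ∈ encodings d δ, muD D / alphaD D * (logCoeff p *
          ∑ E ∈ orderedPartitions p (TofD D) with ∀ k, (E k).Nonempty,
            ∏ k, (NstarE d (E k) : ℚ)) := by
        refine sum_congr rfl fun p _ => ?_
        rw [sum_congr rfl fun v hv => prod_NSev_eq_sum_piFinset (mem_compositions.1 hv).2,
          sum_compositions_sum_piFinset_eq, mul_sum]
        exact sum_congr rfl fun D _ => by rw [sum_compositions_prod_Nd]; ring
    _ = ∑ D ∈ encodings d δ, Qd d D := by
        rw [sum_comm]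
        refine sum_congr rfl fun D hDmem => ?_
        obtain ⟨hD, rfl, -⟩ := mem_encodings.1 hDmem
        have hT : (TofD D).Nonempty := by
          rw [nonempty_iff_ne_empty, Ne, ← encodingOf_eq_zero, encodingOf_TofD]
          rintro rfl
          exact hδ.ne' cogD_zero
        rw [← mul_sum, sum_logCoeff_mul_sum_orderedPartitions (fun B => (NstarE d B : ℚ)) hT
          (card_TofD_le_cogD hD), Qd,
          QstarD_eq_sum]
        push_cast
        rfl

/-- The combinatorial logarithmic Severi degree refines over long-edge graphs with
distributions: `Q^{d,δ} = ∑_{D : δ(D) = δ} Q^d(D)`. -/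
theorem QSev_eq_sum_Qd (d δ : ℕ) (hd : 0 < d) (hδ : 0 < δ) :
    QSev d δ = ∑ᶠ (D : (ℕ × ℕ × ℕ × ℕ) →₀ ℕ) (_ : IsEncoding D ∧ cogD D = δ), Qd d D :=
  QSev_eq_sum_Qd_general d δ hδ
end
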